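/- arXiv:2011.02870 — 4 statements merged into one kernel-verified Lean document; each statement's English description precedes it below -/
import Mathlib

section
/- Every δ-excursion f admits a unique last exit decomposition f = g ⊕_T γ, where T ≥ 0, g is a continuous path with g(0) = g(T) = 0 and max_{[0,T]} g < δ, and γ is an excursion from 0 to 0 that reaches level δ (i.e. γ ∈ Γ_δ). -/
noncomputable section

/-- First nonnegative time at which the path `f` takes the value `x`
(`sInf ∅ = 0` by convention in `ℝ`). -/
def hitTime (f : ℝ → ℝ) (x : ℝ) : ℝ := sInf {t : ℝ | 0 ≤ t ∧ f t = x}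

/-- First strictly positive time at which `f` returns to `0`. -/
def returnTime (f : ℝ → ℝ) : ℝ := sInf {t : ℝ | 0 < t ∧ f t = 0}

/-- Concatenation at time `T` of the paths `u` and `v`. -/
def concatPath (u v : ℝ → ℝ) (T : ℝ) : ℝ → ℝ := fun t => if t < T then u t else v (t - T)

/-- A `δ`-excursion: a continuous path from `0` stopped at its first hitting time of `δ`
(reached in finite time), followed by a continuous path from `δ` stopped at its first
hitting time of `0` (reached in finite time). -/
def IsDeltaExcursion (δ : ℝ) (f : ℝ → ℝ) : Prop :=
  ∃ u v : ℝ → ℝ, Continuous u ∧ Continuous v ∧ u 0 = 0 ∧ v 0 = δ ∧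
    (∃ t, 0 ≤ t ∧ u t = δ) ∧ (∀ t, hitTime u δ ≤ t → u t = δ) ∧
    (∃ t, 0 ≤ t ∧ v t = 0) ∧ (∀ t, hitTime v 0 ≤ t → v t = 0) ∧
    f = concatPath u v (hitTime u δ)

/-- Membership in `Γ_δ`: a continuous excursion from `0` to `0` with first return time
in `(0, ∞)`, identically `0` after its first return, whose maximum reaches `δ`. -/
def MemGamma (δ : ℝ) (γ : ℝ → ℝ) : Prop :=
  Continuous γ ∧ γ 0 = 0 ∧ (∃ t, 0 < t ∧ γ t = 0) ∧ 0 < returnTime γ ∧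
    (∀ t, returnTime γ ≤ t → γ t = 0) ∧ (∃ t, δ ≤ γ t)

lemma hitTime_mem {u : ℝ → ℝ} {x : ℝ} (hu : Continuous u) (h : ∃ t, 0 ≤ t ∧ u t = x) :
    0 ≤ hitTime u x ∧ u (hitTime u x) = x := by
  have hcl : IsClosed {t : ℝ | 0 ≤ t ∧ u t = x} :=
    (isClosed_le continuous_const continuous_id).inter (isClosed_eq hu continuous_const)
  exact hcl.csInf_mem h ⟨0, fun t ht => ht.1⟩

lemma hitTime_le {u : ℝ → ℝ} {x s : ℝ} (hs : 0 ≤ s) (hus : u s = x) : hitTime u x ≤ s :=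
  csInf_le ⟨0, fun t ht => ht.1⟩ ⟨hs, hus⟩

/-- The "validity" predicate of the last-exit decomposition. -/
def IsLED (δ : ℝ) (f : ℝ → ℝ) (p : ℝ × (ℝ → ℝ) × (ℝ → ℝ)) : Prop :=
  0 ≤ p.1 ∧ Continuous p.2.1 ∧ p.2.1 0 = 0 ∧ p.2.1 p.1 = 0 ∧
    (∀ t ∈ Set.Icc 0 p.1, p.2.1 t < δ) ∧ (∀ t, p.1 ≤ t → p.2.1 t = 0) ∧
    MemGamma δ p.2.2 ∧ (∀ t, t ≤ 0 → p.2.2 t = 0) ∧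
    f = concatPath p.2.1 p.2.2 p.1

lemma led_le {δ : ℝ} (hδ : 0 < δ) {f : ℝ → ℝ} {p q : ℝ × (ℝ → ℝ) × (ℝ → ℝ)}
    (hp : IsLED δ f p) (hq : IsLED δ f q) : q.1 ≤ p.1 := by
  by_contra hlt
  push_neg at hlt
  obtain ⟨hp0, -, -, -, hpIcc, -, hpγ, hpγ0, hpf⟩ := hp
  obtain ⟨hq0, -, -, -, hqIcc, -, hqγ, hqγ0, hqf⟩ := hq
  -- f q.1 = 0 (from q's decomposition)
  have hfq : f q.1 = 0 := by
    rw [hqf]; unfold concatPath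
    rw [if_neg (lt_irrefl _), sub_self]; exact hqγ.2.1
  -- hence p's excursion vanishes at q.1 - p.1 > 0
  have h2 : p.2.2 (q.1 - p.1) = 0 := by
    have : f q.1 = p.2.2 (q.1 - p.1) := by
      rw [hpf]; unfold concatPath; rw [if_neg (not_lt.mpr hlt.le)]
    rw [← this, hfq]
  have hRle : returnTime p.2.2 ≤ q.1 - p.1 :=
    csInf_le ⟨0, fun t ht => ht.1.le⟩ ⟨sub_pos.mpr hlt, h2⟩
  -- p's excursion reaches δ at some time s ∈ (0, returnTime)
  obtain ⟨s, hs⟩ := hpγ.2.2.2.2.2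
  have hs0 : 0 < s := by
    by_contra h; push_neg at h
    have := hpγ0 s h; linarith
  have hsR : s < returnTime p.2.2 := by
    by_contra h; push_neg at h
    have := hpγ.2.2.2.2.1 s h; linarith
  -- so f (p.1 + s) ≥ δ, while p.1 + s ∈ [0, q.1] gives f (p.1 + s) < δ
  have hfs : f (p.1 + s) = p.2.2 s := by
    rw [hpf]; unfold concatPath
    rw [if_neg (by linarith : ¬ p.1 + s < p.1)]
    congr 1; ring
  have hlt1 : p.1 + s < q.1 := by linarith
  have hfs2 : f (p.1 + s) = q.2.1 (p.1 + s) := by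
    rw [hqf]; unfold concatPath; rw [if_pos hlt1]
  have := hqIcc (p.1 + s) ⟨by linarith, by linarith⟩
  rw [← hfs2, hfs] at this
  linarith

lemma led_unique {δ : ℝ} (hδ : 0 < δ) {f : ℝ → ℝ} {p q : ℝ × (ℝ → ℝ) × (ℝ → ℝ)}
    (hp : IsLED δ f p) (hq : IsLED δ f q) : q = p := by
  have hT : q.1 = p.1 := le_antisymm (led_le hδ hp hq) (led_le hδ hq hp)
  obtain ⟨T, g, γ⟩ := p
  obtain ⟨T', g', γ'⟩ := q
  simp only at hT
  subst hT
  obtain ⟨hp0, -, -, -, -, hpg0, hpγ, hpγ0, hpf⟩ := hp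
  obtain ⟨-, -, -, -, -, hqg0, hqγ, hqγ0, hqf⟩ := hq
  have hg : g' = g := by
    funext t
    by_cases ht : t < T'
    · have h1 : f t = g t := by rw [hpf]; unfold concatPath; rw [if_pos ht]
      have h2 : f t = g' t := by rw [hqf]; unfold concatPath; rw [if_pos ht]
      rw [← h1, ← h2]
    · push_neg at ht
      rw [show g t = 0 from hpg0 t ht, show g' t = 0 from hqg0 t ht]
  have hγ : γ' = γ := by
    funext t
    rcases le_or_gt t 0 with ht | ht
    · rw [show γ t = 0 from hpγ0 t ht, show γ' t = 0 from hqγ0 t ht]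
    · have h1 : f (T' + t) = γ t := by
        rw [hpf]; unfold concatPath
        rw [if_neg (by linarith : ¬ T' + t < T')]
        congr 1; ring
      have h2 : f (T' + t) = γ' t := by
        rw [hqf]; unfold concatPath
        rw [if_neg (by linarith : ¬ T' + t < T')]
        congr 1; ring
      rw [← h1, ← h2]
  rw [hg, hγ]

/-- Last exit decomposition of a `δ`-excursion: every `δ`-excursion `f` is, in a unique
way, the concatenation at some time `T ≥ 0` of a continuous path `g` from `0` to `0`
staying strictly below `δ` on `[0, T]` (and stopped at `0` after `T`), followed by an
excursion `γ ∈ Γ_δ` from `0` to `0` reaching `δ`. -/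
theorem last_exit_decomposition (δ : ℝ) (hδ : 0 < δ) (f : ℝ → ℝ)
    (hf : IsDeltaExcursion δ f) :
    ∃! p : ℝ × (ℝ → ℝ) × (ℝ → ℝ),
      0 ≤ p.1 ∧ Continuous p.2.1 ∧ p.2.1 0 = 0 ∧ p.2.1 p.1 = 0 ∧
      (∀ t ∈ Set.Icc 0 p.1, p.2.1 t < δ) ∧ (∀ t, p.1 ≤ t → p.2.1 t = 0) ∧
      MemGamma δ p.2.2 ∧ (∀ t, t ≤ 0 → p.2.2 t = 0) ∧
      f = concatPath p.2.1 p.2.2 p.1 := by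
  obtain ⟨u, v, hu, hv, hu0, hv0, huδ, huafter, hv0', hvafter, hfeq⟩ := hf
  set H := hitTime u δ with hHdef
  obtain ⟨hH0, huH⟩ := hitTime_mem hu huδ
  have hHpos : 0 < H := by
    rcases lt_or_eq_of_le hH0 with h | h
    · exact h
    · exfalso; rw [← h, hu0] at huH; exact hδ.ne huH
  -- f agrees with u before H and with v after H
  have hf_lt : ∀ t, t < H → f t = u t := by
    intro t ht; rw [hfeq]; unfold concatPath; rw [if_pos ht]
  have hf_ge : ∀ t, H ≤ t → f t = v (t - H) := by
    intro t ht; rw [hfeq]; unfold concatPath; rw [if_neg (not_lt.mpr ht)]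
  have hfH : f H = δ := by rw [hf_ge H le_rfl, sub_self, hv0]
  -- u stays below δ strictly before H (at nonnegative times)
  have hult : ∀ t, 0 ≤ t → t < H → u t < δ := by
    intro t ht0 htH
    by_contra h
    push_neg at h
    have hIcc : δ ∈ Set.Icc (u 0) (u t) := ⟨by rw [hu0]; exact hδ.le, h⟩
    obtain ⟨s, hsmem, hus⟩ := intermediate_value_Icc ht0 hu.continuousOn hIcc
    have := hitTime_le hsmem.1 hus
    rw [← hHdef] at this
    linarith [hsmem.2]
  -- continuity of f
  have hfc : Continuous f := by
    have heq : f = fun t => if t ≤ H then u t else v (t - H) := by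
      funext t
      rcases lt_trichotomy t H with h | h | h
      · rw [hf_lt t h, if_pos h.le]
      · subst h; rw [hfH, if_pos le_rfl, huH]
      · rw [hf_ge t h.le, if_neg (not_le.mpr h)]
    rw [heq]
    exact Continuous.if_le hu (hv.comp (continuous_id.sub continuous_const))
      continuous_id continuous_const
      (fun x hx => by rw [hx, huH, sub_self, hv0])
  -- T : last zero of u before H
  set Z := {t : ℝ | t ∈ Set.Icc 0 H ∧ u t = 0} with hZdef
  have hZ0 : (0:ℝ) ∈ Z := ⟨⟨le_rfl, hH0⟩, hu0⟩
  have hZbdd : BddAbove Z := ⟨H, fun t ht => ht.1.2⟩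
  have hZcl : IsClosed Z := isClosed_Icc.inter (isClosed_eq hu continuous_const)
  set T := sSup Z with hTdef
  have hTmem : T ∈ Z := hZcl.csSup_mem ⟨0, hZ0⟩ hZbdd
  have huT : u T = 0 := hTmem.2
  have hT0 : 0 ≤ T := hTmem.1.1
  have hTH : T ≤ H := hTmem.1.2
  have hTltH : T < H := by
    rcases lt_or_eq_of_le hTH with h | h
    · exact h
    · exfalso; rw [h, huH] at huT; exact hδ.ne' huT
  have hno0 : ∀ t, T < t → t ≤ H → u t ≠ 0 := by
    intro t h1 h2 h3
    exact absurd (le_csSup hZbdd ⟨⟨hT0.trans h1.le, h2⟩, h3⟩) (not_le.mpr h1)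
  -- K : hitting time of 0 by v
  set K := hitTime v 0 with hKdef
  obtain ⟨hK0, hvK⟩ := hitTime_mem hv hv0'
  have hKpos : 0 < K := by
    rcases lt_or_eq_of_le hK0 with h | h
    · exact h
    · exfalso; rw [← h, hv0] at hvK; exact hδ.ne' hvK
  have hvne : ∀ s, 0 ≤ s → s < K → v s ≠ 0 := by
    intro s h1 h2 h3
    exact absurd (hitTime_le h1 h3) (not_le.mpr h2)
  -- the candidate decomposition
  set g : ℝ → ℝ := fun t => u (min t T) with hgdef
  set γ : ℝ → ℝ := fun t => f (T + max t 0) with hγdef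
  have hγval : ∀ t, 0 ≤ t → γ t = f (T + t) := by
    intro t ht; simp only [hγdef, max_eq_left ht]
  have hγ0 : γ 0 = 0 := by
    rw [hγval 0 le_rfl, add_zero, hf_lt T hTltH, huT]
  -- zeros of γ at positive times are ≥ H - T + K
  have hzero : ∀ t, 0 < t → γ t = 0 → H - T + K ≤ t := by
    intro t ht h0
    rw [hγval t ht.le] at h0
    rcases lt_or_ge (T + t) H with h | h
    · exfalso
      rw [hf_lt _ h] at h0
      exact hno0 (T + t) (by linarith) h.le h0
    · rw [hf_ge _ h] at h0
      by_contra hcon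
      push_neg at hcon
      exact hvne (T + t - H) (by linarith) (by linarith) h0
  have hγHK : γ (H - T + K) = 0 := by
    rw [hγval _ (by linarith)]
    have : T + (H - T + K) = H + K := by ring
    rw [this, hf_ge _ (by linarith)]
    have : H + K - H = K := by ring
    rw [this, hvK]
  have hRge : H - T + K ≤ returnTime γ :=
    le_csInf ⟨H - T + K, ⟨by linarith, hγHK⟩⟩ (fun b hb => hzero b hb.1 hb.2)
  have hgood : IsLED δ f (T, g, γ) := by
    refine ⟨hT0, ?_, ?_, ?_, ?_, ?_, ?_, ?_, ?_⟩
    · exact hu.comp (continuous_id.min continuous_const)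
    · show u (min 0 T) = 0; rw [min_eq_left hT0, hu0]
    · show u (min T T) = 0; rw [min_self, huT]
    · intro t ht
      show u (min t T) < δ
      rw [min_eq_left ht.2]
      exact hult t ht.1 (lt_of_le_of_lt ht.2 hTltH)
    · intro t ht
      show u (min t T) = 0
      rw [min_eq_right ht, huT]
    · refine ⟨hfc.comp (continuous_const.add (continuous_id.max continuous_const)),
        hγ0, ⟨H - T + K, by constructor <;> [linarith; exact hγHK]⟩,
        lt_of_lt_of_le (by linarith) hRge, ?_, ⟨H - T, ?_⟩⟩
      · intro t ht
        have ht' : H - T + K ≤ t := le_trans hRge ht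
        show γ t = 0
        rw [hγval t (by linarith)]
        rw [hf_ge _ (by linarith)]
        exact hvafter (T + t - H) (by linarith)
      · show δ ≤ γ (H - T)
        rw [hγval _ (by linarith)]
        have : T + (H - T) = H := by ring
        rw [this, hfH]
    · intro t ht
      show f (T + max t 0) = 0
      rw [max_eq_right ht, add_zero, hf_lt T hTltH, huT]
    · funext t
      unfold concatPath
      by_cases ht : t < T
      · rw [if_pos ht]
        show f t = u (min t T)
        rw [min_eq_left ht.le]
        exact hf_lt t (lt_trans ht hTltH)
      · push_neg at ht
        rw [if_neg (not_lt.mpr ht)]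
        show f t = f (T + max (t - T) 0)
        rw [max_eq_left (by linarith)]
        congr 1; ring
  exact ⟨(T, g, γ), hgood, fun q hq => led_unique hδ hgood hq⟩
end
end

section
/- Let S : [0,∞) → ℝ be continuous with S(0) = 0 and δ > 0, and suppose S completes infinitely many up-down cycles of [0,δ] (i.e. sup_t D^δ_t(S) = ∞). Then there exists a unique sequence (eₖ)_{k≥1} of δ-excursions such that S(t) = Σ_{k≥1} eₖ((t − θ⁺_{k−1})₊) for all t ≥ 0, where θ⁺₀ = 0 and θ⁺ₖ = Σ_{i=1}^k Λ(eᵢ) with Λ(eᵢ) the duration of the δ-excursion eᵢ. -/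
open scoped ENNReal
noncomputable section

def hitAfter (S : ℝ → ℝ) (P : ℝ → Prop) (a : ℝ≥0∞) : ℝ≥0∞ :=
  sInf {t : ℝ≥0∞ | a < t ∧ t < ⊤ ∧ P (S t.toReal)}

/-- `θ⁺ᵢ` : alternating hitting times of `δ` (from above `θ⁺ᵢ₋₁`) and then `0`. -/
def thetaSeq (S : ℝ → ℝ) (δ : ℝ) : ℕ → ℝ≥0∞
  | 0 => 0
  | n + 1 => hitAfter S (fun x => x ≤ 0) (hitAfter S (fun x => δ ≤ x) (thetaSeq S δ n))

/-- Duration `Λ(f) = T^δ(u) + T⁰(v)` of a `δ`-excursion: the first time at or after the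
first hitting time of `δ` at which `f` is back at `0`. -/
def excDuration (δ : ℝ) (f : ℝ → ℝ) : ℝ := sInf {t : ℝ | hitTime f δ ≤ t ∧ f t = 0}

private lemma hitTime_eq' {g : ℝ → ℝ} {x c : ℝ} (hc0 : 0 ≤ c) (hcx : g c = x)
    (hbefore : ∀ t, 0 ≤ t → t < c → g t ≠ x) : hitTime g x = c := by
  refine le_antisymm (csInf_le ⟨0, fun t ht => ht.1⟩ ⟨hc0, hcx⟩) ?_
  refine le_csInf ⟨c, hc0, hcx⟩ ?_
  rintro t ⟨ht0, htx⟩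
  by_contra h
  exact hbefore t ht0 (not_le.1 h) htx

private lemma hitTime_spec {g : ℝ → ℝ} {x : ℝ} (hg : Continuous g) (h : ∃ t, 0 ≤ t ∧ g t = x) :
    0 ≤ hitTime g x ∧ g (hitTime g x) = x ∧ ∀ t, 0 ≤ t → t < hitTime g x → g t ≠ x := by
  have hcl : IsClosed {t : ℝ | 0 ≤ t ∧ g t = x} := by
    have h2 : {t : ℝ | 0 ≤ t ∧ g t = x} = Set.Ici 0 ∩ g ⁻¹' {x} := by
      ext t
      simp [Set.mem_Ici]
    rw [h2]
    exact isClosed_Ici.inter (isClosed_singleton.preimage hg)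
  have hbdd : BddBelow {t : ℝ | 0 ≤ t ∧ g t = x} := ⟨0, fun t ht => ht.1⟩
  have hmem : hitTime g x ∈ {t : ℝ | 0 ≤ t ∧ g t = x} := hcl.csInf_mem h hbdd
  exact ⟨hmem.1, hmem.2, fun t ht0 htlt htx => notMem_of_lt_csInf htlt hbdd ⟨ht0, htx⟩⟩

private lemma hitAfter_gt {S : ℝ → ℝ} (hS : Continuous S) {P : ℝ → Prop}
    (hP : IsOpen {x | ¬ P x}) {a : ℝ≥0∞} (ha : a ≠ ⊤) (hPa : ¬ P (S a.toReal)) :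
    a < hitAfter S P a := by
  obtain ⟨ε, hε, hball⟩ := Metric.isOpen_iff.1 (hP.preimage hS) a.toReal hPa
  have key : a + ENNReal.ofReal ε ≤ hitAfter S P a := by
    apply le_sInf
    rintro t ⟨hat, htop, hPt⟩
    by_contra hlt
    push_neg at hlt
    have htne : t ≠ ⊤ := htop.ne
    have hsum_ne : a + ENNReal.ofReal ε ≠ ⊤ := ENNReal.add_ne_top.2 ⟨ha, ENNReal.ofReal_ne_top⟩
    have h1 : a.toReal < t.toReal := (ENNReal.toReal_lt_toReal ha htne).2 hat
    have h2 : t.toReal < a.toReal + ε := by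
      have := (ENNReal.toReal_lt_toReal htne hsum_ne).2 hlt
      rwa [ENNReal.toReal_add ha ENNReal.ofReal_ne_top, ENNReal.toReal_ofReal hε.le] at this
    exact hball (by rw [Metric.mem_ball, Real.dist_eq, abs_lt]; constructor <;> linarith) hPt
  exact lt_of_lt_of_le (ENNReal.lt_add_right ha (ENNReal.ofReal_pos.2 hε).ne') key

private lemma hitAfter_P {S : ℝ → ℝ} (hS : Continuous S) {P : ℝ → Prop}
    (hP : IsOpen {x | ¬ P x}) {a : ℝ≥0∞} (hb : hitAfter S P a ≠ ⊤) :
    P (S (hitAfter S P a).toReal) := by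
  by_contra hPb
  obtain ⟨ε, hε, hball⟩ := Metric.isOpen_iff.1 (hP.preimage hS) (hitAfter S P a).toReal hPb
  have hlt : hitAfter S P a < hitAfter S P a + ENNReal.ofReal ε :=
    ENNReal.lt_add_right hb (ENNReal.ofReal_pos.2 hε).ne'
  obtain ⟨t, htA, htlt⟩ := sInf_lt_iff.1 hlt
  have hbt : hitAfter S P a ≤ t := sInf_le htA
  have htne : t ≠ ⊤ := htA.2.1.ne
  have hsum_ne : hitAfter S P a + ENNReal.ofReal ε ≠ ⊤ :=
    ENNReal.add_ne_top.2 ⟨hb, ENNReal.ofReal_ne_top⟩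
  have h1 : (hitAfter S P a).toReal ≤ t.toReal := (ENNReal.toReal_le_toReal hb htne).2 hbt
  have h2 : t.toReal < (hitAfter S P a).toReal + ε := by
    have := (ENNReal.toReal_lt_toReal htne hsum_ne).2 htlt
    rwa [ENNReal.toReal_add hb ENNReal.ofReal_ne_top, ENNReal.toReal_ofReal hε.le] at this
  exact hball (by rw [Metric.mem_ball, Real.dist_eq, abs_lt]; constructor <;> linarith) htA.2.2

private lemma hitAfter_not_between {S : ℝ → ℝ} {P : ℝ → Prop} {a : ℝ≥0∞} (ha : a ≠ ⊤)
    (hb : hitAfter S P a ≠ ⊤) {r : ℝ} (h1 : a.toReal < r) (h2 : r < (hitAfter S P a).toReal) :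
    ¬ P (S r) := by
  intro hPr
  have hr0 : 0 ≤ r := le_trans ENNReal.toReal_nonneg h1.le
  have hmem : ENNReal.ofReal r ∈ {t : ℝ≥0∞ | a < t ∧ t < ⊤ ∧ P (S t.toReal)} := by
    refine ⟨(ENNReal.lt_ofReal_iff_toReal_lt ha).2 h1, ENNReal.ofReal_lt_top, ?_⟩
    rwa [ENNReal.toReal_ofReal hr0]
  exact absurd (sInf_le hmem) (not_le.2 ((ENNReal.ofReal_lt_iff_lt_toReal hr0 hb).2 h2))

private def tauE (S : ℝ → ℝ) (δ : ℝ) (n : ℕ) : ℝ≥0∞ :=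
  hitAfter S (fun x => δ ≤ x) (thetaSeq S δ n)

private def thR (S : ℝ → ℝ) (δ : ℝ) (n : ℕ) : ℝ := (thetaSeq S δ n).toReal
private def taR (S : ℝ → ℝ) (δ : ℝ) (n : ℕ) : ℝ := (tauE S δ n).toReal

private lemma theta_succ (S : ℝ → ℝ) (δ : ℝ) (n : ℕ) :
    thetaSeq S δ (n+1) = hitAfter S (fun x => x ≤ 0) (tauE S δ n) := rfl

private lemma open1 {δ : ℝ} : IsOpen {x : ℝ | ¬ δ ≤ x} := by
  have : {x : ℝ | ¬ δ ≤ x} = Set.Iio δ := by ext x; simp [Set.mem_Iio]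
  rw [this]; exact isOpen_Iio

private lemma open2 : IsOpen {x : ℝ | ¬ x ≤ (0:ℝ)} := by
  have : {x : ℝ | ¬ x ≤ (0:ℝ)} = Set.Ioi 0 := by ext x; simp [Set.mem_Ioi]
  rw [this]; exact isOpen_Ioi

section facts

variable {S : ℝ → ℝ} {δ : ℝ}

private lemma tauE_ne_top (hrec : ∀ n, thetaSeq S δ n ≠ ⊤) (n : ℕ) : tauE S δ n ≠ ⊤ := by
  intro htop
  apply hrec (n+1)
  rw [theta_succ, htop, hitAfter]
  rw [sInf_eq_top]
  intro t ht
  exact absurd ht.1 not_top_lt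

private lemma thR_zero : thR S δ 0 = 0 := by simp [thR, thetaSeq]

private lemma thR_nonneg (n : ℕ) : 0 ≤ thR S δ n := ENNReal.toReal_nonneg

private lemma S_thR_nonpos (hS : Continuous S) (hS0 : S 0 = 0)
    (hrec : ∀ n, thetaSeq S δ n ≠ ⊤) (n : ℕ) : S (thR S δ n) ≤ 0 := by
  cases n with
  | zero => rw [thR_zero, hS0]
  | succ m =>
      have := hitAfter_P (P := fun x => x ≤ 0) hS open2 (a := tauE S δ m)
        (by rw [← theta_succ]; exact hrec (m+1))
      rw [← theta_succ] at this
      exact this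

private lemma theta_lt_tau (hS : Continuous S) (hS0 : S 0 = 0) (hδ : 0 < δ)
    (hrec : ∀ n, thetaSeq S δ n ≠ ⊤) (n : ℕ) : thetaSeq S δ n < tauE S δ n :=
  hitAfter_gt hS open1 (hrec n)
    (by rw [not_le]; exact lt_of_le_of_lt (S_thR_nonpos hS hS0 hrec n) hδ)

private lemma S_taR_ge (hS : Continuous S) (hrec : ∀ n, thetaSeq S δ n ≠ ⊤) (n : ℕ) :
    δ ≤ S (taR S δ n) :=
  hitAfter_P (P := fun x => δ ≤ x) hS open1 (tauE_ne_top hrec n)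

private lemma tau_lt_theta (hS : Continuous S) (hδ : 0 < δ)
    (hrec : ∀ n, thetaSeq S δ n ≠ ⊤) (n : ℕ) : tauE S δ n < thetaSeq S δ (n+1) := by
  rw [theta_succ]
  exact hitAfter_gt hS open2 (tauE_ne_top hrec n)
    (by rw [not_le]; exact lt_of_lt_of_le hδ (S_taR_ge hS hrec n))

private lemma thR_lt_taR (hS : Continuous S) (hS0 : S 0 = 0) (hδ : 0 < δ)
    (hrec : ∀ n, thetaSeq S δ n ≠ ⊤) (n : ℕ) : thR S δ n < taR S δ n :=
  (ENNReal.toReal_lt_toReal (hrec n) (tauE_ne_top hrec n)).2 (theta_lt_tau hS hS0 hδ hrec n)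

private lemma taR_lt_thR (hS : Continuous S) (hδ : 0 < δ)
    (hrec : ∀ n, thetaSeq S δ n ≠ ⊤) (n : ℕ) : taR S δ n < thR S δ (n+1) :=
  (ENNReal.toReal_lt_toReal (tauE_ne_top hrec n) (hrec (n+1))).2 (tau_lt_theta hS hδ hrec n)

private lemma S_lt_delta_between (hrec : ∀ n, thetaSeq S δ n ≠ ⊤) (n : ℕ) {r : ℝ}
    (h1 : thR S δ n < r) (h2 : r < taR S δ n) : S r < δ := by
  have := hitAfter_not_between (S := S) (P := fun x => δ ≤ x) (hrec n) (tauE_ne_top hrec n) h1 h2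
  exact not_le.1 this

private lemma S_pos_between (hrec : ∀ n, thetaSeq S δ n ≠ ⊤) (n : ℕ) {r : ℝ}
    (h1 : taR S δ n < r) (h2 : r < thR S δ (n+1)) : 0 < S r := by
  have hne : hitAfter S (fun x => x ≤ 0) (tauE S δ n) ≠ ⊤ := by
    rw [← theta_succ]; exact hrec (n+1)
  have h2' : r < (hitAfter S (fun x => x ≤ 0) (tauE S δ n)).toReal := by
    rw [← theta_succ]; exact h2
  have := hitAfter_not_between (S := S) (P := fun x => x ≤ 0) (tauE_ne_top hrec n) hne h1 h2'
  exact not_le.1 this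

private lemma S_taR_eq (hS : Continuous S) (hS0 : S 0 = 0) (hδ : 0 < δ)
    (hrec : ∀ n, thetaSeq S δ n ≠ ⊤) (n : ℕ) : S (taR S δ n) = δ := by
  refine le_antisymm ?_ (S_taR_ge hS hrec n)
  by_contra hgt
  push_neg at hgt
  obtain ⟨ε, hε, hball⟩ := Metric.isOpen_iff.1 ((isOpen_Ioi (a := δ)).preimage hS) (taR S δ n) hgt
  have hθτ := thR_lt_taR hS hS0 hδ hrec n
  set r := max (thR S δ n + (taR S δ n - thR S δ n)/2) (taR S δ n - ε/2) with hr
  have hr1 : thR S δ n < r := lt_of_lt_of_le (by linarith) (le_max_left _ _)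
  have hr2 : r < taR S δ n := max_lt (by linarith) (by linarith)
  have hrb : r ∈ Metric.ball (taR S δ n) ε := by
    rw [Metric.mem_ball, Real.dist_eq, abs_lt]
    have := le_max_right (thR S δ n + (taR S δ n - thR S δ n)/2) (taR S δ n - ε/2)
    constructor <;> [linarith; linarith]
  have hgt2 : δ < S r := hball hrb
  have hlt2 : S r < δ := S_lt_delta_between hrec n hr1 hr2
  linarith

private lemma S_thR_eq (hS : Continuous S) (hS0 : S 0 = 0) (hδ : 0 < δ)
    (hrec : ∀ n, thetaSeq S δ n ≠ ⊤) (n : ℕ) : S (thR S δ n) = 0 := by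
  cases n with
  | zero => rw [thR_zero, hS0]
  | succ m =>
      refine le_antisymm (S_thR_nonpos hS hS0 hrec (m+1)) ?_
      by_contra hlt
      push_neg at hlt
      obtain ⟨ε, hε, hball⟩ :=
        Metric.isOpen_iff.1 ((isOpen_Iio (a := (0:ℝ))).preimage hS) (thR S δ (m+1)) hlt
      have hτθ := taR_lt_thR hS hδ hrec m
      set r := max (taR S δ m + (thR S δ (m+1) - taR S δ m)/2) (thR S δ (m+1) - ε/2) with hr
      have hr1 : taR S δ m < r := lt_of_lt_of_le (by linarith) (le_max_left _ _)
      have hr2 : r < thR S δ (m+1) := max_lt (by linarith) (by linarith)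
      have hrb : r ∈ Metric.ball (thR S δ (m+1)) ε := by
        rw [Metric.mem_ball, Real.dist_eq, abs_lt]
        have := le_max_right (taR S δ m + (thR S δ (m+1) - taR S δ m)/2) (thR S δ (m+1) - ε/2)
        constructor <;> [linarith; linarith]
      have hlt2 : S r < 0 := hball hrb
      have hgt2 : 0 < S r := S_pos_between hrec m hr1 hr2
      linarith

private lemma thR_strictMono (hS : Continuous S) (hS0 : S 0 = 0) (hδ : 0 < δ)
    (hrec : ∀ n, thetaSeq S δ n ≠ ⊤) : StrictMono (thR S δ) :=
  strictMono_nat_of_lt_succ fun n =>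
    (thR_lt_taR hS hS0 hδ hrec n).trans (taR_lt_thR hS hδ hrec n)

private lemma thR_unbounded (hS : Continuous S) (hS0 : S 0 = 0) (hδ : 0 < δ)
    (hrec : ∀ n, thetaSeq S δ n ≠ ⊤) (t : ℝ) : ∃ n, t < thR S δ n := by
  by_contra hcon
  push_neg at hcon
  have hmono := (thR_strictMono hS hS0 hδ hrec).monotone
  have hbdd : BddAbove (Set.range (thR S δ)) := ⟨t, by rintro x ⟨n, rfl⟩; exact hcon n⟩
  have hL := tendsto_atTop_ciSup hmono hbdd
  set L := ⨆ n, thR S δ n with hLdef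
  have hθ1 : Filter.Tendsto (fun n => thR S δ (n+1)) Filter.atTop (nhds L) :=
    hL.comp (Filter.tendsto_add_atTop_nat 1)
  have hτL : Filter.Tendsto (taR S δ) Filter.atTop (nhds L) :=
    tendsto_of_tendsto_of_tendsto_of_le_of_le hL hθ1
      (fun n => (thR_lt_taR hS hS0 hδ hrec n).le) (fun n => (taR_lt_thR hS hδ hrec n).le)
  have h1 : Filter.Tendsto (fun n => S (thR S δ n)) Filter.atTop (nhds (S L)) :=
    (hS.tendsto L).comp hL
  have h2 : Filter.Tendsto (fun n => S (taR S δ n)) Filter.atTop (nhds (S L)) :=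
    (hS.tendsto L).comp hτL
  have e1 : S L = 0 := by
    have h0 : Filter.Tendsto (fun _ : ℕ => (0:ℝ)) Filter.atTop (nhds (S L)) := by
      have heq : (fun n => S (thR S δ n)) = fun _ : ℕ => (0:ℝ) := by
        funext n; exact S_thR_eq hS hS0 hδ hrec n
      rwa [heq] at h1
    exact (tendsto_nhds_unique h0 tendsto_const_nhds)
  have e2 : S L = δ := by
    have h0 : Filter.Tendsto (fun _ : ℕ => δ) Filter.atTop (nhds (S L)) := by
      have heq : (fun n => S (taR S δ n)) = fun _ : ℕ => δ := by
        funext n; exact S_taR_eq hS hS0 hδ hrec n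
      rwa [heq] at h2
    exact (tendsto_nhds_unique h0 tendsto_const_nhds)
  rw [e1] at e2
  exact absurd e2.symm hδ.ne'

end facts

/-- Generic facts about a `δ`-excursion. -/
private lemma excursion_facts {δ : ℝ} (hδ : 0 < δ) {f : ℝ → ℝ} (hf : IsDeltaExcursion δ f) :
    0 < hitTime f δ ∧ f (hitTime f δ) = δ ∧ (∀ t, 0 ≤ t → t < hitTime f δ → f t ≠ δ) ∧
    hitTime f δ < excDuration δ f ∧
    (∀ t, hitTime f δ ≤ t → t < excDuration δ f → f t ≠ 0) ∧
    (∀ t, excDuration δ f ≤ t → f t = 0) := by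
  obtain ⟨u, v, hu, hv, hu0, hv0, huex, hustop, hvex, hvstop, hfeq⟩ := hf
  obtain ⟨hTu0, hTuδ, hTubef⟩ := hitTime_spec hu huex
  obtain ⟨hTv0, hTv00, hTvbef⟩ := hitTime_spec hv hvex
  have hTupos : 0 < hitTime u δ := by
    rcases lt_or_eq_of_le hTu0 with h | h
    · exact h
    · exfalso; rw [← h, hu0] at hTuδ; exact hδ.ne hTuδ
  have hTvpos : 0 < hitTime v 0 := by
    rcases lt_or_eq_of_le hTv0 with h | h
    · exact h
    · exfalso; rw [← h, hv0] at hTv00; exact hδ.ne' hTv00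
  have hflt : ∀ t, t < hitTime u δ → f t = u t := by
    intro t ht; rw [hfeq, concatPath]; simp only [if_pos ht]
  have hfge : ∀ t, hitTime u δ ≤ t → f t = v (t - hitTime u δ) := by
    intro t ht; rw [hfeq, concatPath]; simp only [if_neg (not_lt.2 ht)]
  have hfT : hitTime f δ = hitTime u δ := by
    apply hitTime_eq' hTu0
    · rw [hfge _ le_rfl, sub_self, hv0]
    · intro t ht0 htlt
      rw [hflt t htlt]
      exact hTubef t ht0 htlt
  have hdur : excDuration δ f = hitTime u δ + hitTime v 0 := by
    rw [excDuration, hfT]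
    apply le_antisymm
    · apply csInf_le ⟨hitTime u δ, fun t ht => ht.1⟩
      refine ⟨by linarith, ?_⟩
      have harg : hitTime u δ + hitTime v 0 - hitTime u δ = hitTime v 0 := by ring
      rw [hfge _ (by linarith), harg]
      exact hvstop _ le_rfl
    · apply le_csInf
      · refine ⟨hitTime u δ + hitTime v 0, ⟨by linarith, ?_⟩⟩
        have harg : hitTime u δ + hitTime v 0 - hitTime u δ = hitTime v 0 := by ring
        rw [hfge _ (by linarith), harg]
        exact hvstop _ le_rfl
      · rintro t ⟨ht1, ht2⟩
        by_contra hlt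
        push_neg at hlt
        rw [hfge _ ht1] at ht2
        exact hTvbef (t - hitTime u δ) (by linarith) (by linarith) ht2
  refine ⟨by rw [hfT]; exact hTupos, ?_, ?_, ?_, ?_, ?_⟩
  · rw [hfT, hfge _ le_rfl, sub_self, hv0]
  · intro t ht0 htlt
    rw [hfT] at htlt
    rw [hflt t htlt]
    exact hTubef t ht0 htlt
  · rw [hfT, hdur]; linarith
  · intro t ht1 ht2
    rw [hfT] at ht1
    rw [hdur] at ht2
    rw [hfge _ ht1]
    exact hTvbef (t - hitTime u δ) (by linarith) (by linarith)
  · intro t ht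
    rw [hdur] at ht
    rw [hfge _ (by linarith)]
    exact hvstop _ (by linarith)

/-- The constructed `k`-th excursion of `S`. -/
private def excU (S : ℝ → ℝ) (δ : ℝ) (k : ℕ) : ℝ → ℝ :=
  fun s => S (thR S δ k + min (max s 0) (taR S δ k - thR S δ k))

private def excV (S : ℝ → ℝ) (δ : ℝ) (k : ℕ) : ℝ → ℝ :=
  fun s => S (taR S δ k + min (max s 0) (thR S δ (k+1) - taR S δ k))

private def excE (S : ℝ → ℝ) (δ : ℝ) (k : ℕ) : ℝ → ℝ :=
  concatPath (excU S δ k) (excV S δ k) (taR S δ k - thR S δ k)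

section construction

variable {S : ℝ → ℝ} {δ : ℝ}

private lemma excU_cont (hS : Continuous S) (k : ℕ) : Continuous (excU S δ k) :=
  hS.comp (continuous_const.add ((continuous_id.max continuous_const).min continuous_const))

private lemma excV_cont (hS : Continuous S) (k : ℕ) : Continuous (excV S δ k) :=
  hS.comp (continuous_const.add ((continuous_id.max continuous_const).min continuous_const))

private lemma excU_hitTime (hS : Continuous S) (hS0 : S 0 = 0) (hδ : 0 < δ)
    (hrec : ∀ n, thetaSeq S δ n ≠ ⊤) (k : ℕ) :
    hitTime (excU S δ k) δ = taR S δ k - thR S δ k := by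
  have hTk : 0 < taR S δ k - thR S δ k := sub_pos.2 (thR_lt_taR hS hS0 hδ hrec k)
  have hsum : thR S δ k + (taR S δ k - thR S δ k) = taR S δ k := by ring
  apply hitTime_eq' hTk.le
  · show S (thR S δ k + min (max (taR S δ k - thR S δ k) 0) (taR S δ k - thR S δ k)) = δ
    rw [max_eq_left hTk.le, min_self, hsum]
    exact S_taR_eq hS hS0 hδ hrec k
  · intro t ht0 htlt
    show S (thR S δ k + min (max t 0) (taR S δ k - thR S δ k)) ≠ δ
    rw [max_eq_left ht0, min_eq_left htlt.le]
    rcases lt_or_eq_of_le ht0 with h | h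
    · exact (S_lt_delta_between hrec k (by linarith) (by linarith)).ne
    · rw [← h, add_zero, S_thR_eq hS hS0 hδ hrec k]; exact hδ.ne

private lemma excV_hitTime (hS : Continuous S) (hS0 : S 0 = 0) (hδ : 0 < δ)
    (hrec : ∀ n, thetaSeq S δ n ≠ ⊤) (k : ℕ) :
    hitTime (excV S δ k) 0 = thR S δ (k+1) - taR S δ k := by
  have hTk : 0 < thR S δ (k+1) - taR S δ k := sub_pos.2 (taR_lt_thR hS hδ hrec k)
  have hsum : taR S δ k + (thR S δ (k+1) - taR S δ k) = thR S δ (k+1) := by ring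
  apply hitTime_eq' hTk.le
  · show S (taR S δ k + min (max (thR S δ (k+1) - taR S δ k) 0) (thR S δ (k+1) - taR S δ k)) = 0
    rw [max_eq_left hTk.le, min_self, hsum]
    exact S_thR_eq hS hS0 hδ hrec (k+1)
  · intro t ht0 htlt
    show S (taR S δ k + min (max t 0) (thR S δ (k+1) - taR S δ k)) ≠ 0
    rw [max_eq_left ht0, min_eq_left htlt.le]
    rcases lt_or_eq_of_le ht0 with h | h
    · exact (S_pos_between hrec k (by linarith) (by linarith)).ne'
    · rw [← h, add_zero, S_taR_eq hS hS0 hδ hrec k]; exact hδ.ne'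

private lemma excE_isExc (hS : Continuous S) (hS0 : S 0 = 0) (hδ : 0 < δ)
    (hrec : ∀ n, thetaSeq S δ n ≠ ⊤) (k : ℕ) : IsDeltaExcursion δ (excE S δ k) := by
  have hTk : 0 < taR S δ k - thR S δ k := sub_pos.2 (thR_lt_taR hS hS0 hδ hrec k)
  have hTk' : 0 < thR S δ (k+1) - taR S δ k := sub_pos.2 (taR_lt_thR hS hδ hrec k)
  refine ⟨excU S δ k, excV S δ k, excU_cont hS k, excV_cont hS k, ?_, ?_, ?_, ?_, ?_, ?_, ?_⟩
  · show S (thR S δ k + min (max 0 0) (taR S δ k - thR S δ k)) = 0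
    rw [max_self, min_eq_left hTk.le, add_zero]
    exact S_thR_eq hS hS0 hδ hrec k
  · show S (taR S δ k + min (max 0 0) (thR S δ (k+1) - taR S δ k)) = δ
    rw [max_self, min_eq_left hTk'.le, add_zero]
    exact S_taR_eq hS hS0 hδ hrec k
  · refine ⟨taR S δ k - thR S δ k, hTk.le, ?_⟩
    show S (thR S δ k + min (max (taR S δ k - thR S δ k) 0) (taR S δ k - thR S δ k)) = δ
    rw [max_eq_left hTk.le, min_self, show thR S δ k + (taR S δ k - thR S δ k) = taR S δ k by ring]
    exact S_taR_eq hS hS0 hδ hrec k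
  · intro t ht
    rw [excU_hitTime hS hS0 hδ hrec k] at ht
    show S (thR S δ k + min (max t 0) (taR S δ k - thR S δ k)) = δ
    rw [max_eq_left (hTk.le.trans ht), min_eq_right ht,
      show thR S δ k + (taR S δ k - thR S δ k) = taR S δ k by ring]
    exact S_taR_eq hS hS0 hδ hrec k
  · refine ⟨thR S δ (k+1) - taR S δ k, hTk'.le, ?_⟩
    show S (taR S δ k + min (max (thR S δ (k+1) - taR S δ k) 0) (thR S δ (k+1) - taR S δ k)) = 0
    rw [max_eq_left hTk'.le, min_self,
      show taR S δ k + (thR S δ (k+1) - taR S δ k) = thR S δ (k+1) by ring]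
    exact S_thR_eq hS hS0 hδ hrec (k+1)
  · intro t ht
    rw [excV_hitTime hS hS0 hδ hrec k] at ht
    show S (taR S δ k + min (max t 0) (thR S δ (k+1) - taR S δ k)) = 0
    rw [max_eq_left (hTk'.le.trans ht), min_eq_right ht,
      show taR S δ k + (thR S δ (k+1) - taR S δ k) = thR S δ (k+1) by ring]
    exact S_thR_eq hS hS0 hδ hrec (k+1)
  · rw [excE, excU_hitTime hS hS0 hδ hrec k]

private lemma excE_zero (hS : Continuous S) (hS0 : S 0 = 0) (hδ : 0 < δ)
    (hrec : ∀ n, thetaSeq S δ n ≠ ⊤) (k : ℕ) {s : ℝ} (hs : s ≤ 0) : excE S δ k s = 0 := by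
  have hTk : 0 < taR S δ k - thR S δ k := sub_pos.2 (thR_lt_taR hS hS0 hδ hrec k)
  rw [excE, concatPath]
  simp only [if_pos (lt_of_le_of_lt hs hTk)]
  show S (thR S δ k + min (max s 0) (taR S δ k - thR S δ k)) = 0
  rw [max_eq_right hs, min_eq_left hTk.le, add_zero]
  exact S_thR_eq hS hS0 hδ hrec k

private lemma excE_eqS (hS : Continuous S) (hS0 : S 0 = 0) (hδ : 0 < δ)
    (hrec : ∀ n, thetaSeq S δ n ≠ ⊤) (k : ℕ) {s : ℝ} (hs0 : 0 ≤ s)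
    (hsΛ : s ≤ thR S δ (k+1) - thR S δ k) : excE S δ k s = S (thR S δ k + s) := by
  rw [excE, concatPath]
  by_cases hcase : s < taR S δ k - thR S δ k
  · simp only [if_pos hcase]
    show S (thR S δ k + min (max s 0) (taR S δ k - thR S δ k)) = S (thR S δ k + s)
    rw [max_eq_left hs0, min_eq_left hcase.le]
  · simp only [if_neg hcase]
    push_neg at hcase
    show S (taR S δ k + min (max (s - (taR S δ k - thR S δ k)) 0)
      (thR S δ (k+1) - taR S δ k)) = S (thR S δ k + s)
    rw [max_eq_left (by linarith), min_eq_left (by linarith)]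
    congr 1
    ring

private lemma excE_after (hS : Continuous S) (hS0 : S 0 = 0) (hδ : 0 < δ)
    (hrec : ∀ n, thetaSeq S δ n ≠ ⊤) (k : ℕ) {s : ℝ}
    (hs : thR S δ (k+1) - thR S δ k ≤ s) : excE S δ k s = 0 := by
  have hτθ := taR_lt_thR hS hδ hrec k
  have hθτ := thR_lt_taR hS hS0 hδ hrec k
  rw [excE, concatPath]
  simp only [if_neg (not_lt.2 (by linarith : taR S δ k - thR S δ k ≤ s))]
  show S (taR S δ k + min (max (s - (taR S δ k - thR S δ k)) 0)
    (thR S δ (k+1) - taR S δ k)) = 0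
  rw [max_eq_left (by linarith), min_eq_right (by linarith),
    show taR S δ k + (thR S δ (k+1) - taR S δ k) = thR S δ (k+1) by ring]
  exact S_thR_eq hS hS0 hδ hrec (k+1)

private lemma excE_duration (hS : Continuous S) (hS0 : S 0 = 0) (hδ : 0 < δ)
    (hrec : ∀ n, thetaSeq S δ n ≠ ⊤) (k : ℕ) :
    excDuration δ (excE S δ k) = thR S δ (k+1) - thR S δ k := by
  have hτθ := taR_lt_thR hS hδ hrec k
  have hθτ := thR_lt_taR hS hS0 hδ hrec k
  have hfT : hitTime (excE S δ k) δ = taR S δ k - thR S δ k := by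
    apply hitTime_eq' (by linarith)
    · rw [excE, concatPath]
      simp only [if_neg (lt_irrefl (taR S δ k - thR S δ k))]
      show S (taR S δ k + min (max (taR S δ k - thR S δ k - (taR S δ k - thR S δ k)) 0)
        (thR S δ (k+1) - taR S δ k)) = δ
      rw [sub_self, max_self, min_eq_left (by linarith), add_zero]
      exact S_taR_eq hS hS0 hδ hrec k
    · intro t ht0 htlt
      rw [excE, concatPath]
      simp only [if_pos htlt]
      show S (thR S δ k + min (max t 0) (taR S δ k - thR S δ k)) ≠ δ
      rw [max_eq_left ht0, min_eq_left htlt.le]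
      rcases lt_or_eq_of_le ht0 with h | h
      · exact (S_lt_delta_between hrec k (by linarith) (by linarith)).ne
      · rw [← h, add_zero, S_thR_eq hS hS0 hδ hrec k]; exact hδ.ne
  rw [excDuration, hfT]
  apply le_antisymm
  · apply csInf_le ⟨taR S δ k - thR S δ k, fun t ht => ht.1⟩
    exact ⟨by linarith, excE_after hS hS0 hδ hrec k le_rfl⟩
  · apply le_csInf
    · exact ⟨thR S δ (k+1) - thR S δ k, by linarith, excE_after hS hS0 hδ hrec k le_rfl⟩
    rintro t ⟨ht1, ht2⟩
    by_contra hlt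
    push_neg at hlt
    rw [excE_eqS hS hS0 hδ hrec k (by linarith) hlt.le] at ht2
    rcases lt_or_eq_of_le ht1 with h | h
    · exact (S_pos_between hrec k (by linarith) (by linarith)).ne' ht2
    · rw [← h, show thR S δ k + (taR S δ k - thR S δ k) = taR S δ k by ring,
        S_taR_eq hS hS0 hδ hrec k] at ht2
      exact hδ.ne' ht2

end construction

/-- Decomposition of a continuous path with infinitely many up-down cycles of `[0, δ]`
into a unique sequence of `δ`-excursions, concatenated at the partial sums of their
durations. -/
theorem path_decomposition_delta_excursions (S : ℝ → ℝ) (hS : Continuous S)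
    (hS0 : S 0 = 0) (δ : ℝ) (hδ : 0 < δ)
    (hrec : ∀ n, thetaSeq S δ n ≠ ⊤) :
    ∃! e : ℕ → ℝ → ℝ,
      (∀ k, IsDeltaExcursion δ (e k)) ∧ (∀ k, ∀ s, s ≤ 0 → e k s = 0) ∧
      ∀ t, 0 ≤ t →
        S t = ∑' k, e k (max (t - ∑ i ∈ Finset.range k, excDuration δ (e i)) 0) := by
  classical
  have hθτ := thR_lt_taR hS hS0 hδ hrec
  have hτθ := taR_lt_thR hS hδ hrec
  have hmono := (thR_strictMono hS hS0 hδ hrec).monotone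
  have hsum : ∀ k, (∑ i ∈ Finset.range k, excDuration δ (excE S δ i)) = thR S δ k := by
    intro k
    rw [Finset.sum_congr rfl (fun i _ => excE_duration hS hS0 hδ hrec i),
      Finset.sum_range_sub (thR S δ), thR_zero, sub_zero]
  have hform : ∀ t, 0 ≤ t →
      S t = ∑' k, excE S δ k (max (t - ∑ i ∈ Finset.range k, excDuration δ (excE S δ i)) 0) := by
    intro t ht
    obtain ⟨k, hk1, hk2⟩ : ∃ k, thR S δ k ≤ t ∧ t < thR S δ (k+1) := by
      have hex : ∃ n, t < thR S δ n := thR_unbounded hS hS0 hδ hrec t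
      have hN := Nat.find_spec hex
      have hN0 : Nat.find hex ≠ 0 := by
        intro h0
        rw [h0, thR_zero] at hN
        linarith
      obtain ⟨m, hm⟩ := Nat.exists_eq_succ_of_ne_zero hN0
      refine ⟨m, ?_, by rw [← Nat.succ_eq_add_one, ← hm]; exact hN⟩
      have := Nat.find_min hex (show m < Nat.find hex by omega)
      linarith [not_lt.1 this]
    have hsingle : (∑' i, excE S δ i
          (max (t - ∑ j ∈ Finset.range i, excDuration δ (excE S δ j)) 0))
        = excE S δ k (max (t - ∑ j ∈ Finset.range k, excDuration δ (excE S δ j)) 0) := by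
      apply tsum_eq_single
      intro i hik
      rw [hsum i]
      rcases lt_or_gt_of_ne hik with h | h
      · have h1 : thR S δ (i+1) ≤ thR S δ k := hmono (by omega)
        have h0 : thR S δ i ≤ thR S δ (i+1) := hmono (by omega)
        rw [max_eq_left (by linarith)]
        exact excE_after hS hS0 hδ hrec i (by linarith)
      · have h1 : thR S δ (k+1) ≤ thR S δ i := hmono (by omega)
        rw [max_eq_right (by linarith)]
        exact excE_zero hS hS0 hδ hrec i le_rfl
    rw [hsingle, hsum k, max_eq_left (by linarith),
      excE_eqS hS hS0 hδ hrec k (by linarith) (by linarith)]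
    congr 1
    ring
  refine ⟨excE S δ, ⟨fun k => excE_isExc hS hS0 hδ hrec k,
    fun k s hs => excE_zero hS hS0 hδ hrec k hs, hform⟩, ?_⟩
  rintro e' ⟨h1', h2', h3'⟩
  have hfacts := fun k => excursion_facts hδ (h1' k)
  have hΛpos : ∀ k, 0 < excDuration δ (e' k) := fun k => (hfacts k).1.trans (hfacts k).2.2.2.1
  have hσmono : ∀ i j, i ≤ j → (∑ x ∈ Finset.range i, excDuration δ (e' x))
      ≤ ∑ x ∈ Finset.range j, excDuration δ (e' x) := fun i j hij =>
    Finset.sum_le_sum_of_subset_of_nonneg (Finset.range_subset_range.2 hij)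
      (fun x _ _ => (hΛpos x).le)
  have hval : ∀ k, (∑ i ∈ Finset.range k, excDuration δ (e' i)) = thR S δ k →
      ∀ s, 0 ≤ s → s ≤ excDuration δ (e' k) → e' k s = S (thR S δ k + s) := by
    intro k hσk s hs0 hsΛ
    have ht0 : 0 ≤ thR S δ k + s := add_nonneg (thR_nonneg k) hs0
    have h := h3' (thR S δ k + s) ht0
    have hsingle : (∑' i, e' i
          (max (thR S δ k + s - ∑ j ∈ Finset.range i, excDuration δ (e' j)) 0))
        = e' k (max (thR S δ k + s - ∑ j ∈ Finset.range k, excDuration δ (e' j)) 0) := by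
      apply tsum_eq_single
      intro i hik
      rcases lt_or_gt_of_ne hik with hlt | hgt
      · have hle : (∑ x ∈ Finset.range i, excDuration δ (e' x)) + excDuration δ (e' i)
            ≤ ∑ x ∈ Finset.range k, excDuration δ (e' x) := by
          rw [← Finset.sum_range_succ]
          exact hσmono (i+1) k (by omega)
        rw [hσk] at hle
        have harg : excDuration δ (e' i)
            ≤ thR S δ k + s - ∑ x ∈ Finset.range i, excDuration δ (e' x) := by linarith
        rw [max_eq_left (le_trans (hΛpos i).le harg)]
        exact (hfacts i).2.2.2.2.2 _ harg
      · have hge : (∑ x ∈ Finset.range k, excDuration δ (e' x)) + excDuration δ (e' k)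
            ≤ ∑ x ∈ Finset.range i, excDuration δ (e' x) := by
          rw [← Finset.sum_range_succ]
          exact hσmono (k+1) i (by omega)
        rw [hσk] at hge
        rw [max_eq_right (by linarith)]
        exact h2' i 0 le_rfl
    rw [hsingle, hσk, show thR S δ k + s - thR S δ k = s by ring, max_eq_left hs0] at h
    exact h.symm
  have hstep : ∀ k, (∑ i ∈ Finset.range k, excDuration δ (e' i)) = thR S δ k →
      excDuration δ (e' k) = thR S δ (k+1) - thR S δ k := by
    intro k hσk
    obtain ⟨hTpos, hTδ, hTbef, hTΛ, hmid, haft⟩ := hfacts k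
    set T' := hitTime (e' k) δ with hT'def
    set Λ' := excDuration δ (e' k) with hΛ'def
    have hSθT : S (thR S δ k + T') = δ := by
      rw [← hval k hσk T' hTpos.le hTΛ.le]
      exact hTδ
    have hT1 : taR S δ k ≤ thR S δ k + T' := by
      by_contra hcon
      push_neg at hcon
      exact absurd hSθT (S_lt_delta_between hrec k (by linarith) hcon).ne
    have hT2 : thR S δ k + T' ≤ taR S δ k := by
      by_contra hcon
      push_neg at hcon
      have hs0 : (0:ℝ) ≤ taR S δ k - thR S δ k := by linarith [hθτ k]
      have hslt : taR S δ k - thR S δ k < T' := by linarith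
      have hvv := hval k hσk (taR S δ k - thR S δ k) hs0 (by linarith)
      rw [show thR S δ k + (taR S δ k - thR S δ k) = taR S δ k by ring,
        S_taR_eq hS hS0 hδ hrec k] at hvv
      exact hTbef _ hs0 hslt hvv
    have hTeq : thR S δ k + T' = taR S δ k := le_antisymm hT2 hT1
    have hSθΛ : S (thR S δ k + Λ') = 0 := by
      rw [← hval k hσk Λ' (hTpos.trans hTΛ).le le_rfl]
      exact haft _ le_rfl
    have hΛ1 : thR S δ (k+1) ≤ thR S δ k + Λ' := by
      by_contra hcon
      push_neg at hcon
      exact absurd hSθΛ (S_pos_between hrec k (by linarith [hTΛ, hTeq]) hcon).ne'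
    have hΛ2 : thR S δ k + Λ' ≤ thR S δ (k+1) := by
      by_contra hcon
      push_neg at hcon
      have hs0 : (0:ℝ) ≤ thR S δ (k+1) - thR S δ k := by linarith [hθτ k, hτθ k]
      have hvv := hval k hσk (thR S δ (k+1) - thR S δ k) hs0 (by linarith)
      rw [show thR S δ k + (thR S δ (k+1) - thR S δ k) = thR S δ (k+1) by ring,
        S_thR_eq hS hS0 hδ hrec (k+1)] at hvv
      exact hmid _ (by linarith [hτθ k]) (by linarith) hvv
    linarith [le_antisymm hΛ2 hΛ1]
  have hσθ : ∀ k, (∑ i ∈ Finset.range k, excDuration δ (e' i)) = thR S δ k := by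
    intro k
    induction k with
    | zero => simp [thR_zero]
    | succ n ih =>
        rw [Finset.sum_range_succ, ih, hstep n ih]
        ring
  funext k s
  rcases le_or_gt s 0 with hs | hs
  · rw [h2' k s hs]
    exact (excE_zero hS hS0 hδ hrec k hs).symm
  rcases lt_or_ge s (thR S δ (k+1) - thR S δ k) with hsΛ | hsΛ
  · rw [hval k (hσθ k) s hs.le (by rw [hstep k (hσθ k)]; exact hsΛ.le)]
    exact (excE_eqS hS hS0 hδ hrec k hs.le hsΛ.le).symm
  · rw [(hfacts k).2.2.2.2.2 s (by rw [hstep k (hσθ k)]; exact hsΛ)]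
    exact (excE_after hS hS0 hδ hrec k hsΛ).symm
end
end

section
/- For δ > 0, any excursion interval of a continuous path S during which S reaches level δ contains exactly one first-hitting time τ⁺ᵢ of δ (in the sense of the δ-excursion decomposition), and conversely each δ-excursion cycle contains exactly one excursion from 0 that reaches δ. -/
open scoped ENNReal
noncomputable section

def tauSeq (S : ℝ → ℝ) (δ : ℝ) : ℕ → ℝ≥0∞
  | 0 => 0
  | n + 1 => hitAfter S (fun x => δ ≤ x) (thetaSeq S δ n)

section Helpers

variable {S : ℝ → ℝ} {P : ℝ → Prop} {a : ℝ≥0∞}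

def RSet (S : ℝ → ℝ) (P : ℝ → Prop) (a : ℝ) : Set ℝ := {t : ℝ | a < t ∧ P (S t)}

variable {S : ℝ → ℝ} {P : ℝ → Prop} {a : ℝ≥0∞}

lemma le_hitAfter : a ≤ hitAfter S P a := le_sInf fun t ht => ht.1.le

lemma hitAfter_set_eq (ha : a ≠ ⊤) :
    {t : ℝ≥0∞ | a < t ∧ t < ⊤ ∧ P (S t.toReal)} = ENNReal.ofReal '' RSet S P a.toReal := by
  ext t
  constructor
  · rintro ⟨h1, h2, h3⟩
    exact ⟨t.toReal, ⟨(ENNReal.toReal_lt_toReal ha h2.ne).mpr h1, h3⟩, ENNReal.ofReal_toReal h2.ne⟩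
  · rintro ⟨r, ⟨hr1, hr2⟩, rfl⟩
    have hr0 : 0 ≤ r := le_trans ENNReal.toReal_nonneg hr1.le
    refine ⟨(ENNReal.lt_ofReal_iff_toReal_lt ha).mpr hr1, ENNReal.ofReal_lt_top, ?_⟩
    rw [ENNReal.toReal_ofReal hr0]; exact hr2

lemma hitAfter_ne_top (h : hitAfter S P a ≠ ⊤) :
    a ≠ ⊤ ∧ (RSet S P a.toReal).Nonempty := by
  have hne : {t : ℝ≥0∞ | a < t ∧ t < ⊤ ∧ P (S t.toReal)}.Nonempty := by
    by_contra hc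
    rw [Set.not_nonempty_iff_eq_empty] at hc
    exact h (by rw [hitAfter, hc, sInf_empty])
  obtain ⟨t, h1, h2, h3⟩ := hne
  exact ⟨(h1.trans h2).ne, ⟨t.toReal, (ENNReal.toReal_lt_toReal (h1.trans h2).ne h2.ne).mpr h1, h3⟩⟩

lemma hitAfter_eq_ofReal (ha : a ≠ ⊤) (hne : (RSet S P a.toReal).Nonempty) :
    hitAfter S P a = ENNReal.ofReal (sInf (RSet S P a.toReal)) := by
  rw [hitAfter, hitAfter_set_eq ha]
  exact (Monotone.map_csInf_of_continuousAt ENNReal.continuous_ofReal.continuousAt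
    (fun x y h => ENNReal.ofReal_le_ofReal h) hne ⟨a.toReal, fun r hr => hr.1.le⟩).symm

lemma hitAfter_spec (hS : Continuous S) (hP : IsClosed {x : ℝ | P x}) (ha : a ≠ ⊤)
    (hne : (RSet S P a.toReal).Nonempty) :
    hitAfter S P a ≠ ⊤ ∧
    a.toReal ≤ (hitAfter S P a).toReal ∧
    P (S (hitAfter S P a).toReal) ∧
    ∀ t : ℝ, a.toReal < t → t < (hitAfter S P a).toReal → ¬ P (S t) := by
  have hbdd : BddBelow (RSet S P a.toReal) := ⟨a.toReal, fun r hr => hr.1.le⟩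
  have heq := hitAfter_eq_ofReal ha hne
  have hge : a.toReal ≤ sInf (RSet S P a.toReal) := le_csInf hne fun r hr => hr.1.le
  have h0 : 0 ≤ sInf (RSet S P a.toReal) := le_trans ENNReal.toReal_nonneg hge
  have htr : (hitAfter S P a).toReal = sInf (RSet S P a.toReal) := by
    rw [heq, ENNReal.toReal_ofReal h0]
  refine ⟨by rw [heq]; exact ENNReal.ofReal_ne_top, htr ▸ hge, ?_, ?_⟩
  · have hcl : sInf (RSet S P a.toReal) ∈ closure (RSet S P a.toReal) :=
      csInf_mem_closure hne hbdd
    have hsub : closure (RSet S P a.toReal) ⊆ {t : ℝ | P (S t)} :=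
      closure_minimal (fun r hr => hr.2) (hP.preimage hS)
    rw [htr]; exact hsub hcl
  · intro t h1 h2 hPt
    rw [htr] at h2
    exact absurd (csInf_le hbdd ⟨h1, hPt⟩) (not_le.mpr h2)

variable {δ : ℝ}

lemma thetaSeq_succ (S : ℝ → ℝ) (δ : ℝ) (n : ℕ) :
    thetaSeq S δ (n + 1) = hitAfter S (fun x => x ≤ 0) (tauSeq S δ (n + 1)) := rfl

lemma theta_mono (S : ℝ → ℝ) (δ : ℝ) : Monotone (thetaSeq S δ) :=
  monotone_nat_of_le_succ fun n => le_trans le_hitAfter (by rw [thetaSeq_succ]; exact le_hitAfter)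

lemma theta_le_tau (S : ℝ → ℝ) (δ : ℝ) (n : ℕ) : thetaSeq S δ n ≤ tauSeq S δ (n + 1) :=
  le_hitAfter

lemma tau_le_theta (S : ℝ → ℝ) (δ : ℝ) (n : ℕ) : tauSeq S δ (n + 1) ≤ thetaSeq S δ (n + 1) := by
  rw [thetaSeq_succ]; exact le_hitAfter

lemma theta_nonpos (hS : Continuous S) (hS0 : S 0 = 0) (n : ℕ) (h : thetaSeq S δ n ≠ ⊤) :
    S (thetaSeq S δ n).toReal ≤ 0 := by
  cases n with
  | zero => simp only [thetaSeq, ENNReal.toReal_zero, hS0, le_refl]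
  | succ n =>
    rw [thetaSeq_succ] at h ⊢
    obtain ⟨ha, hne⟩ := hitAfter_ne_top h
    exact (hitAfter_spec hS isClosed_Iic ha hne).2.2.1

/-- All the facts about one completed δ-excursion cycle. -/
lemma cycle_props (hS : Continuous S) (hS0 : S 0 = 0) (hδ : 0 < δ) (n : ℕ)
    (h : thetaSeq S δ (n + 1) ≠ ⊤) :
    thetaSeq S δ n ≠ ⊤ ∧ tauSeq S δ (n + 1) ≠ ⊤ ∧
    (thetaSeq S δ n).toReal < (tauSeq S δ (n + 1)).toReal ∧
    (tauSeq S δ (n + 1)).toReal < (thetaSeq S δ (n + 1)).toReal ∧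
    S (thetaSeq S δ n).toReal ≤ 0 ∧ δ ≤ S (tauSeq S δ (n + 1)).toReal ∧
    S (thetaSeq S δ (n + 1)).toReal ≤ 0 ∧
    (∀ t : ℝ, (thetaSeq S δ n).toReal < t → t < (tauSeq S δ (n + 1)).toReal → S t < δ) ∧
    (∀ t : ℝ, (tauSeq S δ (n + 1)).toReal < t → t < (thetaSeq S δ (n + 1)).toReal → 0 < S t) := by
  rw [thetaSeq_succ] at h
  obtain ⟨hτ, hne2⟩ := hitAfter_ne_top h
  obtain ⟨hθ, hne1⟩ := hitAfter_ne_top hτ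
  have spec1 := hitAfter_spec (P := fun x => δ ≤ x) hS isClosed_Ici hθ hne1
  have spec2 := hitAfter_spec (P := fun x => x ≤ 0) hS isClosed_Iic hτ hne2
  have hθnp : S (thetaSeq S δ n).toReal ≤ 0 := theta_nonpos hS hS0 n hθ
  rw [← thetaSeq_succ] at spec2
  have hτeq : hitAfter S (fun x => δ ≤ x) (thetaSeq S δ n) = tauSeq S δ (n + 1) := rfl
  rw [hτeq] at spec1
  refine ⟨hθ, hτ, ?_, ?_, hθnp, spec1.2.2.1, spec2.2.2.1, ?_, ?_⟩
  · exact lt_of_le_of_ne spec1.2.1 (fun he => by rw [he] at hθnp; have := spec1.2.2.1; linarith)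
  · exact lt_of_le_of_ne spec2.2.1 (fun he => by have h1 := spec1.2.2.1; rw [he] at h1; have h2 := spec2.2.2.1; linarith)
  · intro t h1 h2; exact not_le.mp (spec1.2.2.2 t h1 h2)
  · intro t h1 h2; exact not_le.mp (spec2.2.2.2 t h1 h2)

end Helpers

/-- A maximal excursion interval of `S` away from `0`: an interval `(a, b)` with zero
endpoint values on which `S` does not vanish. -/
def IsExcursionInterval (S : ℝ → ℝ) (a b : ℝ) : Prop :=
  0 ≤ a ∧ a < b ∧ S a = 0 ∧ S b = 0 ∧ ∀ t ∈ Set.Ioo a b, S t ≠ 0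

section Helpers2
variable {S : ℝ → ℝ} {δ : ℝ} {P : ℝ → Prop} {a : ℝ≥0∞}

lemma part2 (hS : Continuous S) (hS0 : S 0 = 0) (hδ : 0 < δ) (n : ℕ)
    (h : thetaSeq S δ (n + 1) ≠ ⊤) :
    ∃! p : ℝ × ℝ, IsExcursionInterval S p.1 p.2 ∧
        (∃ t ∈ Set.Ioo p.1 p.2, δ ≤ S t) ∧
        Set.Icc p.1 p.2 ⊆ Set.Icc (thetaSeq S δ n).toReal (thetaSeq S δ (n + 1)).toReal := by
  obtain ⟨hθ, hτ, huv, hvw, hSu, hSv, hSw, hlt, hpos⟩ := cycle_props hS hS0 hδ n h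
  set u := (thetaSeq S δ n).toReal with hu
  set v := (tauSeq S δ (n + 1)).toReal with hv
  set w := (thetaSeq S δ (n + 1)).toReal with hw
  have hu0 : 0 ≤ u := ENNReal.toReal_nonneg
  set Z1 : Set ℝ := Set.Icc u v ∩ S ⁻¹' {0} with hZ1
  set Z2 : Set ℝ := Set.Icc v w ∩ S ⁻¹' {0} with hZ2
  have hZ1ne : Z1.Nonempty := by
    obtain ⟨t, ht, hts⟩ := intermediate_value_Icc huv.le hS.continuousOn
      (show (0 : ℝ) ∈ Set.Icc (S u) (S v) from ⟨hSu, le_trans hδ.le hSv⟩)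
    exact ⟨t, ht, hts⟩
  have hZ2ne : Z2.Nonempty := by
    obtain ⟨t, ht, hts⟩ := intermediate_value_Icc' hvw.le hS.continuousOn
      (show (0 : ℝ) ∈ Set.Icc (S w) (S v) from ⟨hSw, le_trans hδ.le hSv⟩)
    exact ⟨t, ht, hts⟩
  have hZ1c : IsClosed Z1 := isClosed_Icc.inter (isClosed_singleton.preimage hS)
  have hZ2c : IsClosed Z2 := isClosed_Icc.inter (isClosed_singleton.preimage hS)
  have hZ1b : BddAbove Z1 := ⟨v, fun t ht => ht.1.2⟩
  have hZ2b : BddBelow Z2 := ⟨v, fun t ht => ht.1.1⟩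
  set a := sSup Z1 with hadef
  set b := sInf Z2 with hbdef
  have ha : a ∈ Z1 := hZ1c.csSup_mem hZ1ne hZ1b
  have hb : b ∈ Z2 := hZ2c.csInf_mem hZ2ne hZ2b
  have hSa : S a = 0 := ha.2
  have hSb : S b = 0 := hb.2
  have hav : a < v := lt_of_le_of_ne ha.1.2 (fun he => by rw [he] at hSa; linarith)
  have hvb : v < b := lt_of_le_of_ne hb.1.1 (fun he => by rw [← he] at hSb; linarith)
  refine ⟨(a, b), ⟨⟨le_trans hu0 ha.1.1, hav.trans hvb, hSa, hSb, ?_⟩,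
    ⟨v, ⟨hav, hvb⟩, hSv⟩, Set.Icc_subset_Icc ha.1.1 hb.1.2⟩, ?_⟩
  · intro t ht hts
    rcases le_or_gt t v with hc | hc
    · exact absurd (le_csSup hZ1b ⟨⟨le_trans ha.1.1 ht.1.le, hc⟩, hts⟩) (not_le.mpr ht.1)
    · exact absurd (csInf_le hZ2b ⟨⟨hc.le, le_trans ht.2.le hb.1.2⟩, hts⟩) (not_le.mpr ht.2)
  · rintro ⟨a', b'⟩ ⟨⟨ha'0, hab', hSa', hSb', hne'⟩, ⟨t, ht, hδt⟩, hsub⟩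
    have ha'uw : a' ∈ Set.Icc u w := hsub ⟨le_refl a', hab'.le⟩
    have hb'uw : b' ∈ Set.Icc u w := hsub ⟨hab'.le, le_refl b'⟩
    have htuw : t ∈ Set.Icc u w := hsub ⟨ht.1.le, ht.2.le⟩
    have htv : v ≤ t := by
      by_contra hc
      push_neg at hc
      rcases eq_or_lt_of_le htuw.1 with he | hlt'
      · rw [he] at hSu; linarith
      · linarith [hlt t hlt' hc]
    have ha'v : a' < v := by
      by_contra hc
      push_neg at hc
      rcases eq_or_lt_of_le hc with he | hlt'
      · rw [← he] at hSa'; linarith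
      · have ha'w : a' < w := lt_of_lt_of_le (lt_of_lt_of_le ht.1 ht.2.le) hb'uw.2
        linarith [hpos a' hlt' ha'w]
    have hvb' : v < b' := lt_of_le_of_lt htv ht.2
    have ha'a : a' = a := by
      have h1 : a' ≤ a := le_csSup hZ1b ⟨⟨ha'uw.1, ha'v.le⟩, hSa'⟩
      rcases eq_or_lt_of_le h1 with he | hlt'
      · exact he
      · exact absurd hSa (hne' a ⟨hlt', hav.trans hvb'⟩)
    have hb'b : b' = b := by
      have h1 : b ≤ b' := csInf_le hZ2b ⟨⟨hvb'.le, hb'uw.2⟩, hSb'⟩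
      rcases eq_or_lt_of_le h1 with he | hlt'
      · exact he.symm
      · exact absurd hSb (hne' b ⟨ha'v.trans hvb, hlt'⟩)
    exact Prod.ext ha'a hb'b

lemma hitAfter_le_of_mem {t : ℝ≥0∞} (h1 : a < t) (h2 : t ≠ ⊤) (h3 : P (S t.toReal)) :
    hitAfter S P a ≤ t := sInf_le ⟨h1, lt_top_iff_ne_top.mpr h2, h3⟩

lemma pos_on_excursion (hS : Continuous S) {a b t₀ : ℝ} (hexc : IsExcursionInterval S a b)
    (ht₀ : t₀ ∈ Set.Ioo a b) (hp : 0 < S t₀) : ∀ t ∈ Set.Ioo a b, 0 < S t := by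
  intro t ht
  rcases (hexc.2.2.2.2 t ht).lt_or_gt with hneg | hp'
  · exfalso
    obtain ⟨s, hs, hs0⟩ := intermediate_value_uIcc hS.continuousOn
      (show (0 : ℝ) ∈ Set.uIcc (S t) (S t₀) from Set.mem_uIcc.mpr (Or.inl ⟨hneg.le, hp.le⟩))
    exact hexc.2.2.2.2 s (Set.ordConnected_Ioo.uIcc_subset ht ht₀ hs) hs0
  · exact hp'

lemma part1 (hS : Continuous S) (hS0 : S 0 = 0) (hδ : 0 < δ) (a b : ℝ)
    (hexc : IsExcursionInterval S a b) (hreach : ∃ t ∈ Set.Ioo a b, δ ≤ S t) :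
    ∃! i : ℕ, 1 ≤ i ∧ ENNReal.ofReal a < tauSeq S δ i ∧ tauSeq S δ i < ENNReal.ofReal b := by
  obtain ⟨ha0, hab, hSa, hSb, hne0⟩ := hexc
  obtain ⟨t₀, ht₀, hδt₀⟩ := hreach
  have hposab : ∀ t ∈ Set.Ioo a b, 0 < S t :=
    pos_on_excursion hS ⟨ha0, hab, hSa, hSb, hne0⟩ ht₀ (lt_of_lt_of_le hδ hδt₀)
  -- Step through one cycle
  have key : ∀ n : ℕ, thetaSeq S δ n ≠ ⊤ → thetaSeq S δ n ≤ ENNReal.ofReal a →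
      (thetaSeq S δ (n + 1) ≠ ⊤ ∧ thetaSeq S δ (n + 1) ≤ ENNReal.ofReal a) ∨
      (ENNReal.ofReal a < tauSeq S δ (n + 1) ∧ tauSeq S δ (n + 1) < ENNReal.ofReal b) := by
    intro n hn hna
    have hθa : (thetaSeq S δ n).toReal ≤ a := (ENNReal.le_ofReal_iff_toReal_le hn ha0).mp hna
    have hne : (RSet S (fun x => δ ≤ x) (thetaSeq S δ n).toReal).Nonempty :=
      ⟨t₀, lt_of_le_of_lt hθa ht₀.1, hδt₀⟩
    have spec := hitAfter_spec (P := fun x => δ ≤ x) hS isClosed_Ici hn hne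
    have heq : hitAfter S (fun x => δ ≤ x) (thetaSeq S δ n) = tauSeq S δ (n + 1) := rfl
    rw [heq] at spec
    have hτle : tauSeq S δ (n + 1) ≤ ENNReal.ofReal t₀ := by
      refine hitAfter_le_of_mem ?_ ENNReal.ofReal_ne_top ?_
      · exact (ENNReal.lt_ofReal_iff_toReal_lt hn).mpr (lt_of_le_of_lt hθa ht₀.1)
      · rw [ENNReal.toReal_ofReal (le_trans ha0 ht₀.1.le)]; exact hδt₀
    have hτne : tauSeq S δ (n + 1) ≠ ⊤ :=
      (lt_of_le_of_lt hτle ENNReal.ofReal_lt_top).ne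
    have hτb : tauSeq S δ (n + 1) < ENNReal.ofReal b :=
      lt_of_le_of_lt hτle ((ENNReal.ofReal_lt_ofReal_iff (lt_of_le_of_lt ha0 hab)).mpr ht₀.2)
    rcases lt_or_ge (ENNReal.ofReal a) (tauSeq S δ (n + 1)) with hcase | hcase
    · exact Or.inr ⟨hcase, hτb⟩
    · left
      have h1 : (tauSeq S δ (n + 1)).toReal ≤ a :=
        (ENNReal.le_ofReal_iff_toReal_le hτne ha0).mp hcase
      have hSτ : δ ≤ S (tauSeq S δ (n + 1)).toReal := spec.2.2.1
      have h2 : (tauSeq S δ (n + 1)).toReal < a :=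
        lt_of_le_of_ne h1 (fun he => by rw [he, hSa] at hSτ; linarith)
      have h3 : tauSeq S δ (n + 1) < ENNReal.ofReal a :=
        (ENNReal.lt_ofReal_iff_toReal_lt hτne).mpr h2
      have h4 : thetaSeq S δ (n + 1) ≤ ENNReal.ofReal a := by
        rw [thetaSeq_succ]
        exact hitAfter_le_of_mem h3 ENNReal.ofReal_ne_top
          (by rw [ENNReal.toReal_ofReal ha0, hSa])
      exact ⟨(lt_of_le_of_lt h4 ENNReal.ofReal_lt_top).ne, h4⟩
  -- uniform continuity growth bound
  obtain ⟨ε, hε, hmod⟩ : ∃ ε > 0, ∀ x ∈ Set.Icc (0:ℝ) a, ∀ y ∈ Set.Icc (0:ℝ) a,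
      dist x y < ε → dist (S x) (S y) < δ :=
    Metric.uniformContinuousOn_iff.mp
      ((isCompact_Icc : IsCompact (Set.Icc (0:ℝ) a)).uniformContinuousOn_of_continuous
        hS.continuousOn) δ hδ
  have growth : ∀ n : ℕ, thetaSeq S δ n ≠ ⊤ → thetaSeq S δ n ≤ ENNReal.ofReal a →
      (n : ℝ) * ε ≤ (thetaSeq S δ n).toReal := by
    intro n
    induction n with
    | zero => intro _ _; simp [thetaSeq]
    | succ n ih =>
      intro hn1 hle1
      have hτθ : tauSeq S δ (n + 1) ≤ thetaSeq S δ (n + 1) := tau_le_theta S δ n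
      have hθτ : thetaSeq S δ n ≤ tauSeq S δ (n + 1) := theta_le_tau S δ n
      have hτne : tauSeq S δ (n + 1) ≠ ⊤ := (lt_of_le_of_lt hτθ hn1.lt_top).ne
      have hθne : thetaSeq S δ n ≠ ⊤ := (lt_of_le_of_lt hθτ hτne.lt_top).ne
      have hθle : thetaSeq S δ n ≤ ENNReal.ofReal a := le_trans (le_trans hθτ hτθ) hle1
      have IH := ih hθne hθle
      have hθr : (thetaSeq S δ n).toReal ∈ Set.Icc (0:ℝ) a :=
        ⟨ENNReal.toReal_nonneg, (ENNReal.le_ofReal_iff_toReal_le hθne ha0).mp hθle⟩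
      have hτr : (tauSeq S δ (n + 1)).toReal ∈ Set.Icc (0:ℝ) a :=
        ⟨ENNReal.toReal_nonneg,
          (ENNReal.le_ofReal_iff_toReal_le hτne ha0).mp (le_trans hτθ hle1)⟩
      have hSθ : S (thetaSeq S δ n).toReal ≤ 0 := theta_nonpos hS hS0 n hθne
      have hSτ : δ ≤ S (tauSeq S δ (n + 1)).toReal := by
        obtain ⟨_, hne⟩ := hitAfter_ne_top
          (show hitAfter S (fun x => δ ≤ x) (thetaSeq S δ n) ≠ ⊤ from hτne)
        exact (hitAfter_spec hS isClosed_Ici hθne hne).2.2.1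
      have hord : (thetaSeq S δ n).toReal ≤ (tauSeq S δ (n + 1)).toReal :=
        ENNReal.toReal_mono hτne hθτ
      have hdist : ε ≤ dist (tauSeq S δ (n + 1)).toReal (thetaSeq S δ n).toReal := by
        by_contra hc
        push_neg at hc
        have h5 := hmod _ hτr _ hθr hc
        rw [Real.dist_eq] at h5
        have h6 : S (tauSeq S δ (n + 1)).toReal - S (thetaSeq S δ n).toReal ≤
            |S (tauSeq S δ (n + 1)).toReal - S (thetaSeq S δ n).toReal| := le_abs_self _
        linarith
      rw [Real.dist_eq, abs_of_nonneg (by linarith)] at hdist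
      have hfin : (tauSeq S δ (n + 1)).toReal ≤ (thetaSeq S δ (n + 1)).toReal :=
        ENNReal.toReal_mono hn1 hτθ
      push_cast
      linarith
  -- there is a first cycle leaving [0, a]
  have hfind : ∃ n : ℕ, ¬(thetaSeq S δ n ≠ ⊤ ∧ thetaSeq S δ n ≤ ENNReal.ofReal a) := by
    by_contra hc
    push_neg at hc
    obtain ⟨n, hn⟩ := exists_nat_gt (a / ε)
    have h1 := growth n (hc n).1 (hc n).2
    have h2 : (thetaSeq S δ n).toReal ≤ a :=
      (ENNReal.le_ofReal_iff_toReal_le (hc n).1 ha0).mp (hc n).2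
    have h3 : a < n * ε := (div_lt_iff₀ hε).mp hn
    linarith
  classical
  have hNspec := Nat.find_spec hfind
  have hprop0 : thetaSeq S δ 0 ≠ ⊤ ∧ thetaSeq S δ 0 ≤ ENNReal.ofReal a :=
    ⟨by simp [thetaSeq], by simp [thetaSeq]⟩
  have hN0 : Nat.find hfind ≠ 0 := by
    intro h0
    rw [h0] at hNspec
    exact hNspec hprop0
  obtain ⟨M, hM⟩ : ∃ M, Nat.find hfind = M + 1 :=
    ⟨Nat.find hfind - 1, (Nat.succ_pred_eq_of_pos (Nat.pos_of_ne_zero hN0)).symm⟩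
  have hMgood : thetaSeq S δ M ≠ ⊤ ∧ thetaSeq S δ M ≤ ENNReal.ofReal a :=
    not_not.mp (Nat.find_min hfind (by omega))
  rw [hM] at hNspec
  have hMkey := key M hMgood.1 hMgood.2
  have hex : ENNReal.ofReal a < tauSeq S δ (M + 1) ∧ tauSeq S δ (M + 1) < ENNReal.ofReal b := by
    rcases hMkey with hl | hr
    · exact absurd hl hNspec
    · exact hr
  -- pairwise exclusion
  have pair : ∀ i j : ℕ,
      (1 ≤ i ∧ ENNReal.ofReal a < tauSeq S δ i ∧ tauSeq S δ i < ENNReal.ofReal b) →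
      (1 ≤ j ∧ ENNReal.ofReal a < tauSeq S δ j ∧ tauSeq S δ j < ENNReal.ofReal b) →
      i < j → False := by
    rintro i j ⟨hi1, hia, hib⟩ ⟨hj1, hja, hjb⟩ hij
    obtain ⟨m, rfl⟩ : ∃ m, i = m + 1 := ⟨i - 1, (Nat.succ_pred_eq_of_pos hi1).symm⟩
    have hτne : tauSeq S δ (m + 1) ≠ ⊤ := (lt_of_lt_of_le hib le_top).ne
    have hτa : a < (tauSeq S δ (m + 1)).toReal :=
      (ENNReal.ofReal_lt_iff_lt_toReal ha0 hτne).mp hia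
    have hθb : thetaSeq S δ (m + 1) = ENNReal.ofReal b := by
      rw [thetaSeq_succ]
      refine le_antisymm (hitAfter_le_of_mem hib ENNReal.ofReal_ne_top ?_) (le_sInf ?_)
      · rw [ENNReal.toReal_ofReal (le_trans ha0 hab.le)]; exact le_of_eq hSb
      · rintro t ⟨h1, h2, h3⟩
        by_contra hc
        push_neg at hc
        have h4 : t.toReal < b := (ENNReal.lt_ofReal_iff_toReal_lt h2.ne).mp hc
        have h5 : a < t.toReal := lt_trans hτa ((ENNReal.toReal_lt_toReal hτne h2.ne).mpr h1)
        exact absurd h3 (not_le.mpr (hposab t.toReal ⟨h5, h4⟩))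
    obtain ⟨k, rfl⟩ : ∃ k, j = k + 1 := ⟨j - 1, (Nat.succ_pred_eq_of_pos hj1).symm⟩
    have hk : m + 1 ≤ k := Nat.lt_succ_iff.mp hij
    have hge : ENNReal.ofReal b ≤ tauSeq S δ (k + 1) :=
      hθb ▸ le_trans (theta_mono S δ hk) (theta_le_tau S δ k)
    exact absurd hjb (not_lt.mpr hge)
  refine ⟨M + 1, ⟨Nat.succ_le_succ (Nat.zero_le _), hex⟩, ?_⟩
  intro j hj
  by_contra hnej
  rcases lt_or_gt_of_ne hnej with hlt | hgt
  · exact pair j (M + 1) hj ⟨Nat.succ_le_succ (Nat.zero_le _), hex⟩ hlt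
  · exact pair (M + 1) j ⟨Nat.succ_le_succ (Nat.zero_le _), hex⟩ hj hgt

end Helpers2

/-- Every maximal excursion interval of `S` on which `S` reaches `δ` contains exactly one
of the first-hitting times `τ⁺ᵢ` of `δ`, and conversely each completed `δ`-excursion
cycle `[θ⁺ᵢ₋₁, θ⁺ᵢ]` contains exactly one excursion from `0` reaching `δ`. -/
theorem excursion_interval_hitting_correspondence (S : ℝ → ℝ) (hS : Continuous S)
    (hS0 : S 0 = 0) (δ : ℝ) (hδ : 0 < δ) :
    (∀ a b : ℝ, IsExcursionInterval S a b → (∃ t ∈ Set.Ioo a b, δ ≤ S t) →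
      ∃! i : ℕ, 1 ≤ i ∧ ENNReal.ofReal a < tauSeq S δ i ∧
        tauSeq S δ i < ENNReal.ofReal b) ∧
    (∀ i : ℕ, 1 ≤ i → thetaSeq S δ i ≠ ⊤ →
      ∃! p : ℝ × ℝ, IsExcursionInterval S p.1 p.2 ∧
        (∃ t ∈ Set.Ioo p.1 p.2, δ ≤ S t) ∧
        Set.Icc p.1 p.2 ⊆
          Set.Icc (thetaSeq S δ (i - 1)).toReal (thetaSeq S δ i).toReal) := by
  refine ⟨fun a b hexc hreach => part1 hS hS0 hδ a b hexc hreach, fun i hi hne => ?_⟩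
  obtain ⟨n, rfl⟩ : ∃ n, i = n + 1 := ⟨i - 1, (Nat.succ_pred_eq_of_pos hi).symm⟩
  simp only [Nat.add_sub_cancel]
  exact part2 hS hS0 hδ n hne
end
end

section
/- Along a continuous path S with δ-excursion decomposition into pieces uᵢ (from 0 to δ) and vᵢ (from δ to 0), the value of the self-financing short strategy φ⁺ = −Σₖ 1_{[τ⁺ₖ, θ⁺ₖ)} satisfies V_t(φ⁺) − V_0(φ⁺) = δ·D^δ_t(S) + 1_{[τ⁺_{D+1}, θ⁺_{D+1}]}(t)·(δ − v_{D+1}(t − τ⁺_{D+1})), where D = D^δ_t(S) is the number of completed cycles by time t. -/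
open scoped ENNReal
noncomputable section

/-- `clip t a = t ∧ a`, with the convention `t ∧ ⊤ = t`. -/
def clip (t : ℝ) (a : ℝ≥0∞) : ℝ := if a < ⊤ then min t a.toReal else t

/-- Number of completed up-down cycles of `[0, δ]` by time `t`. -/
def Dnum (S : ℝ → ℝ) (δ : ℝ) (t : ℝ) : ℕ :=
  {i : ℕ | 1 ≤ i ∧ thetaSeq S δ i ≤ ENNReal.ofReal t}.ncard

/-- Gain `V_t(φ⁺) - V_0(φ⁺) = ∫₀ᵗ φ⁺ dS = Σᵢ (S_{t ∧ τ⁺ᵢ} - S_{t ∧ θ⁺ᵢ})` of the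
self-financing strategy shorting one unit on each holding period `[τ⁺ᵢ, θ⁺ᵢ)`. -/
def portfolioGain (S : ℝ → ℝ) (δ : ℝ) (t : ℝ) : ℝ :=
  ∑' i : ℕ, (S (clip t (tauSeq S δ (i + 1))) - S (clip t (thetaSeq S δ (i + 1))))

/-- The piece `vᵢ(s) = δ + S((s + τ⁺ᵢ) ∧ θ⁺ᵢ) - S(τ⁺ᵢ)` of the `δ`-excursion
decomposition (path from `δ` to `0`). -/
def vpiece (S : ℝ → ℝ) (δ : ℝ) (i : ℕ) (s : ℝ) : ℝ :=
  δ + S (clip (s + (tauSeq S δ i).toReal) (thetaSeq S δ i)) - S ((tauSeq S δ i).toReal)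

namespace PFAux

variable {S : ℝ → ℝ} {P : ℝ → Prop} {δ t : ℝ}

lemma le_hitAfter (S : ℝ → ℝ) (P : ℝ → Prop) (a : ℝ≥0∞) : a ≤ hitAfter S P a :=
  le_sInf fun _ ht => ht.1.le

lemma not_P_of_lt_hitAfter {a s : ℝ≥0∞} (has : a < s) (hs : s < hitAfter S P a)
    (hst : s < ⊤) : ¬ P (S s.toReal) := by
  intro h
  have hmem : s ∈ {t : ℝ≥0∞ | a < t ∧ t < ⊤ ∧ P (S t.toReal)} := ⟨has, hst, h⟩
  exact absurd (sInf_le hmem) (not_le.2 hs)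

lemma hitAfter_P (hS : Continuous S) (hP : IsClosed {x | P x}) {a : ℝ≥0∞}
    (hb : hitAfter S P a < ⊤) : P (S (hitAfter S P a).toReal) := by
  have key : ∀ n : ℕ, ∃ s : ℝ, (hitAfter S P a).toReal ≤ s ∧
      s ≤ (hitAfter S P a).toReal + 1/(n+1) ∧ P (S s) := by
    intro n
    have hpos : (0:ℝ) < 1/(n+1) := by positivity
    have hlt : hitAfter S P a < hitAfter S P a + ENNReal.ofReal (1/(n+1)) :=
      ENNReal.lt_add_right hb.ne (ENNReal.ofReal_pos.2 hpos).ne'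
    have hlt' : sInf {t : ℝ≥0∞ | a < t ∧ t < ⊤ ∧ P (S t.toReal)} <
        hitAfter S P a + ENNReal.ofReal (1/(n+1)) := hlt
    obtain ⟨u, hu, hub⟩ := sInf_lt_iff.mp hlt'
    have hbu : hitAfter S P a ≤ u := sInf_le hu
    have hune : u ≠ ⊤ := hu.2.1.ne
    have hsumne : hitAfter S P a + ENNReal.ofReal (1/(n+1)) ≠ ⊤ :=
      ENNReal.add_ne_top.2 ⟨hb.ne, ENNReal.ofReal_ne_top⟩
    refine ⟨u.toReal, (ENNReal.toReal_le_toReal hb.ne hune).2 hbu, ?_, hu.2.2⟩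
    have h2 : u.toReal ≤ (hitAfter S P a + ENNReal.ofReal (1/(n+1))).toReal :=
      (ENNReal.toReal_le_toReal hune hsumne).2 hub.le
    rwa [ENNReal.toReal_add hb.ne ENNReal.ofReal_ne_top, ENNReal.toReal_ofReal hpos.le] at h2
  choose s hs1 hs2 hs3 using key
  have hub : Filter.Tendsto (fun n : ℕ => (hitAfter S P a).toReal + 1/(n+1)) Filter.atTop
      (nhds ((hitAfter S P a).toReal + 0)) :=
    Filter.Tendsto.add tendsto_const_nhds tendsto_one_div_add_atTop_nhds_zero_nat
  rw [add_zero] at hub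
  have hts : Filter.Tendsto s Filter.atTop (nhds (hitAfter S P a).toReal) :=
    tendsto_of_tendsto_of_tendsto_of_le_of_le tendsto_const_nhds hub hs1 hs2
  exact hP.mem_of_tendsto ((hS.tendsto _).comp hts) (Filter.Eventually.of_forall hs3)

lemma lt_hitAfter (hS : Continuous S) (hP : IsClosed {x | P x}) {a : ℝ≥0∞}
    (ha : a < ⊤) (hnP : ¬ P (S a.toReal)) : a < hitAfter S P a := by
  rcases (le_hitAfter S P a).lt_or_eq with h | h
  · exact h
  · exfalso
    have hfin : hitAfter S P a < ⊤ := h ▸ ha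
    exact hnP (h ▸ hitAfter_P hS hP hfin)

lemma theta_le_tau (S : ℝ → ℝ) (δ : ℝ) (n : ℕ) :
    thetaSeq S δ n ≤ tauSeq S δ (n+1) := le_hitAfter _ _ _

lemma tau_le_theta (S : ℝ → ℝ) (δ : ℝ) (n : ℕ) :
    tauSeq S δ (n+1) ≤ thetaSeq S δ (n+1) := le_hitAfter _ _ _

lemma theta_mono (S : ℝ → ℝ) (δ : ℝ) : Monotone (thetaSeq S δ) :=
  monotone_nat_of_le_succ fun n => (theta_le_tau S δ n).trans (tau_le_theta S δ n)

lemma isClosed_ge (δ : ℝ) : IsClosed {x : ℝ | δ ≤ x} := isClosed_Ici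
lemma isClosed_le0 : IsClosed {x : ℝ | x ≤ 0} := isClosed_Iic

/-- If `S` at `θ_n` is `0`, then `S` at `τ_{n+1}` (if finite) is exactly `δ`. -/
lemma tau_val (hS : Continuous S) (hδ : 0 < δ) (n : ℕ)
    (hθval : S (thetaSeq S δ n).toReal = 0) (hfin : tauSeq S δ (n+1) < ⊤) :
    S (tauSeq S δ (n+1)).toReal = δ := by
  set a := thetaSeq S δ n with hadef
  set τ := tauSeq S δ (n+1) with hτdef
  have hτhit : τ = hitAfter S (fun x => δ ≤ x) a := rfl
  have haτ : a ≤ τ := theta_le_tau S δ n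
  have hafin : a < ⊤ := lt_of_le_of_lt haτ hfin
  have hup : δ ≤ S τ.toReal := by
    have := hitAfter_P hS (isClosed_ge δ) (a := a) (hτhit ▸ hfin)
    rwa [← hτhit] at this
  have hstrict : a < τ := by
    rw [hτhit]
    exact lt_hitAfter hS (isClosed_ge δ) hafin (by rw [hθval]; exact not_le.2 hδ)
  by_contra hne
  have hgt : δ < S τ.toReal := lt_of_le_of_ne hup (fun h => hne h.symm)
  have hlt : a.toReal < τ.toReal := (ENNReal.toReal_lt_toReal hafin.ne hfin.ne).2 hstrict
  obtain ⟨x, hxmem, hx⟩ := intermediate_value_Icc hlt.le hS.continuousOn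
    ⟨hθval ▸ hδ.le, hgt.le⟩
  have hx1 : a.toReal < x := lt_of_le_of_ne hxmem.1 (by rintro rfl; rw [hx] at hθval; linarith)
  have hx2 : x < τ.toReal := lt_of_le_of_ne hxmem.2 (by rintro rfl; rw [hx] at hgt; linarith)
  have hx0 : 0 ≤ x := le_trans ENNReal.toReal_nonneg hxmem.1
  have hmem : ENNReal.ofReal x ∈ {u : ℝ≥0∞ | a < u ∧ u < ⊤ ∧ δ ≤ S u.toReal} :=
    ⟨(ENNReal.lt_ofReal_iff_toReal_lt hafin.ne).2 hx1, ENNReal.ofReal_lt_top,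
      by rw [ENNReal.toReal_ofReal hx0, hx]⟩
  have : τ ≤ ENNReal.ofReal x := hτhit ▸ sInf_le hmem
  exact absurd this (not_le.2 ((ENNReal.ofReal_lt_iff_lt_toReal hx0 hfin.ne).2 hx2))

/-- If `S` at `τ_{n+1}` is `δ`, then `S` at `θ_{n+1}` (if finite) is exactly `0`. -/
lemma theta_val (hS : Continuous S) (hδ : 0 < δ) (n : ℕ)
    (hτval : S (tauSeq S δ (n+1)).toReal = δ) (hfin : thetaSeq S δ (n+1) < ⊤) :
    S (thetaSeq S δ (n+1)).toReal = 0 := by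
  set τ := tauSeq S δ (n+1) with hτdef
  set θ := thetaSeq S δ (n+1) with hθdef
  have hθhit : θ = hitAfter S (fun x => x ≤ 0) τ := rfl
  have hτθ : τ ≤ θ := tau_le_theta S δ n
  have hτfin : τ < ⊤ := lt_of_le_of_lt hτθ hfin
  have hdown : S θ.toReal ≤ 0 := by
    have := hitAfter_P hS isClosed_le0 (a := τ) (hθhit ▸ hfin)
    rwa [← hθhit] at this
  have hstrict : τ < θ := by
    rw [hθhit]
    exact lt_hitAfter hS isClosed_le0 hτfin (by rw [hτval]; exact not_le.2 hδ)
  by_contra hne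
  have hlt0 : S θ.toReal < 0 := lt_of_le_of_ne hdown hne
  have hlt : τ.toReal < θ.toReal := (ENNReal.toReal_lt_toReal hτfin.ne hfin.ne).2 hstrict
  obtain ⟨x, hxmem, hx⟩ := intermediate_value_Icc' hlt.le hS.continuousOn
    ⟨hlt0.le, hτval ▸ hδ.le⟩
  have hx1 : τ.toReal < x := lt_of_le_of_ne hxmem.1 (by rintro rfl; rw [hx] at hτval; linarith)
  have hx2 : x < θ.toReal := lt_of_le_of_ne hxmem.2 (by rintro rfl; rw [hx] at hlt0; linarith)
  have hx0 : 0 ≤ x := le_trans ENNReal.toReal_nonneg hxmem.1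
  have hmem : ENNReal.ofReal x ∈ {u : ℝ≥0∞ | τ < u ∧ u < ⊤ ∧ S u.toReal ≤ 0} :=
    ⟨(ENNReal.lt_ofReal_iff_toReal_lt hτfin.ne).2 hx1, ENNReal.ofReal_lt_top,
      by rw [ENNReal.toReal_ofReal hx0, hx]⟩
  have : θ ≤ ENNReal.ofReal x := hθhit ▸ sInf_le hmem
  exact absurd this (not_le.2 ((ENNReal.ofReal_lt_iff_lt_toReal hx0 hfin.ne).2 hx2))

lemma vals (hS : Continuous S) (hS0 : S 0 = 0) (hδ : 0 < δ) : ∀ n : ℕ,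
    (thetaSeq S δ n < ⊤ → S (thetaSeq S δ n).toReal = 0) ∧
    (tauSeq S δ (n+1) < ⊤ → S (tauSeq S δ (n+1)).toReal = δ) := by
  intro n
  induction n with
  | zero =>
    have hbase : S (thetaSeq S δ 0).toReal = 0 := by
      show S (ENNReal.toReal 0) = 0
      rw [ENNReal.toReal_zero]; exact hS0
    exact ⟨fun _ => hbase, fun hfin => tau_val hS hδ 0 hbase hfin⟩
  | succ n ih =>
    have hθ : thetaSeq S δ (n+1) < ⊤ → S (thetaSeq S δ (n+1)).toReal = 0 := by
      intro hfin
      exact theta_val hS hδ n (ih.2 (lt_of_le_of_lt (tau_le_theta S δ n) hfin)) hfin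
    exact ⟨hθ, fun hfin =>
      tau_val hS hδ (n+1) (hθ (lt_of_le_of_lt (theta_le_tau S δ (n+1)) hfin)) hfin⟩

lemma clip_of_le {a : ℝ≥0∞} (ht : 0 ≤ t) (h : a ≤ ENNReal.ofReal t) :
    clip t a = a.toReal := by
  have ha : a < ⊤ := lt_of_le_of_lt h ENNReal.ofReal_lt_top
  have h2 : a.toReal ≤ t := by
    have := (ENNReal.toReal_le_toReal ha.ne ENNReal.ofReal_ne_top).2 h
    rwa [ENNReal.toReal_ofReal ht] at this
  rw [clip, if_pos ha, min_eq_right h2]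

lemma clip_of_gt {a : ℝ≥0∞} (ht : 0 ≤ t) (h : ENNReal.ofReal t < a) : clip t a = t := by
  rw [clip]
  split
  · next ha =>
    exact min_eq_left ((ENNReal.ofReal_lt_iff_lt_toReal ht ha.ne).1 h).le
  · rfl

end PFAux

namespace PFAux
variable {S : ℝ → ℝ} {δ t : ℝ}

lemma A_finite (hS : Continuous S) (hS0 : S 0 = 0) (hδ : 0 < δ) (ht : 0 ≤ t) :
    {i : ℕ | 1 ≤ i ∧ thetaSeq S δ i ≤ ENNReal.ofReal t}.Finite := by
  set A := {i : ℕ | 1 ≤ i ∧ thetaSeq S δ i ≤ ENNReal.ofReal t} with hA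
  by_contra hinf
  have hinf' : A.Infinite := hinf
  have hall : ∀ i : ℕ, thetaSeq S δ i ≤ ENNReal.ofReal t := by
    intro i
    obtain ⟨j, hj, hij⟩ := hinf'.exists_gt i
    exact le_trans (theta_mono S δ hij.le) hj.2
  have hθfin : ∀ i, thetaSeq S δ i ≠ ⊤ :=
    fun i => (lt_of_le_of_lt (hall i) ENNReal.ofReal_lt_top).ne
  have hτle : ∀ i, tauSeq S δ (i+1) ≤ ENNReal.ofReal t :=
    fun i => le_trans (tau_le_theta S δ i) (hall (i+1))
  have hτfin : ∀ i, tauSeq S δ (i+1) ≠ ⊤ :=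
    fun i => (lt_of_le_of_lt (hτle i) ENNReal.ofReal_lt_top).ne
  set x : ℕ → ℝ := fun i => (thetaSeq S δ i).toReal with hx
  set y : ℕ → ℝ := fun i => (tauSeq S δ (i+1)).toReal with hy
  have hxmono : Monotone x :=
    fun i j hij => (ENNReal.toReal_le_toReal (hθfin i) (hθfin j)).2 (theta_mono S δ hij)
  have hxbdd : ∀ i, x i ≤ t := by
    intro i
    have := (ENNReal.toReal_le_toReal (hθfin i) ENNReal.ofReal_ne_top).2 (hall i)
    rwa [ENNReal.toReal_ofReal ht] at this
  have hbdd : BddAbove (Set.range x) := ⟨t, by rintro _ ⟨i, rfl⟩; exact hxbdd i⟩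
  have hxlim := tendsto_atTop_ciSup hxmono hbdd
  have hy1 : ∀ i, x i ≤ y i :=
    fun i => (ENNReal.toReal_le_toReal (hθfin i) (hτfin i)).2 (theta_le_tau S δ i)
  have hy2 : ∀ i, y i ≤ x (i+1) :=
    fun i => (ENNReal.toReal_le_toReal (hτfin i) (hθfin (i+1))).2 (tau_le_theta S δ i)
  have hylim : Filter.Tendsto y Filter.atTop (nhds (⨆ i, x i)) :=
    tendsto_of_tendsto_of_tendsto_of_le_of_le hxlim
      (hxlim.comp (Filter.tendsto_add_atTop_nat 1)) hy1 hy2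
  have hx0 : ∀ i, S (x i) = 0 :=
    fun i => (vals hS hS0 hδ i).1 (lt_top_iff_ne_top.2 (hθfin i))
  have hyδ : ∀ i, S (y i) = δ :=
    fun i => (vals hS hS0 hδ i).2 (lt_top_iff_ne_top.2 (hτfin i))
  have h1 : Filter.Tendsto (fun i => S (x i)) Filter.atTop (nhds (S (⨆ i, x i))) :=
    (hS.tendsto _).comp hxlim
  have h2 : Filter.Tendsto (fun i => S (y i)) Filter.atTop (nhds (S (⨆ i, x i))) :=
    (hS.tendsto _).comp hylim
  have hL0 : S (⨆ i, x i) = 0 :=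
    tendsto_nhds_unique h1 (tendsto_const_nhds.congr (fun i => (hx0 i).symm))
  have hLδ : S (⨆ i, x i) = δ :=
    tendsto_nhds_unique h2 (tendsto_const_nhds.congr (fun i => (hyδ i).symm))
  rw [hL0] at hLδ
  exact absurd hLδ.symm hδ.ne'

lemma A_eq_Icc (hS : Continuous S) (hS0 : S 0 = 0) (hδ : 0 < δ) (ht : 0 ≤ t) :
    {i : ℕ | 1 ≤ i ∧ thetaSeq S δ i ≤ ENNReal.ofReal t} = Set.Icc 1 (Dnum S δ t) := by
  have hDdef : Dnum S δ t = {i : ℕ | 1 ≤ i ∧ thetaSeq S δ i ≤ ENNReal.ofReal t}.ncard := rfl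
  set A := {i : ℕ | 1 ≤ i ∧ thetaSeq S δ i ≤ ENNReal.ofReal t} with hA
  have hfin : A.Finite := A_finite hS hS0 hδ ht
  rcases A.eq_empty_or_nonempty with hemp | hne
  · rw [hDdef, hemp]
    simp
  · have hFne : hfin.toFinset.Nonempty := by
      rwa [Set.Finite.toFinset_nonempty]
    set M := hfin.toFinset.max' hFne with hM
    have hMA : M ∈ A := by
      have := hfin.toFinset.max'_mem hFne
      rwa [Set.Finite.mem_toFinset] at this
    have hle : ∀ j ∈ A, j ≤ M := by
      intro j hj
      exact hfin.toFinset.le_max' j (by rwa [Set.Finite.mem_toFinset])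
    have hAeq : A = Set.Icc 1 M := by
      apply subset_antisymm
      · exact fun j hj => ⟨hj.1, hle j hj⟩
      · exact fun i hi => ⟨hi.1, le_trans (theta_mono S δ hi.2) hMA.2⟩
    have hcard : A.ncard = M := by
      rw [hAeq, ← Finset.coe_Icc, Set.ncard_coe_finset, Nat.card_Icc]
      omega
    rw [hDdef, hcard, hAeq]

end PFAux

/-- Value of the one-sided strategy `φ⁺` along a path: realized profit `δ · D^δ_t(S)`
plus the mark-to-market value of the currently open position, expressed through the
`δ`-excursion decomposition. -/
theorem portfolio_value_formula (S : ℝ → ℝ) (hS : Continuous S) (hS0 : S 0 = 0)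
    (δ t : ℝ) (hδ : 0 < δ) (ht : 0 ≤ t) :
    portfolioGain S δ t =
      δ * (Dnum S δ t : ℝ) +
        (if tauSeq S δ (Dnum S δ t + 1) ≤ ENNReal.ofReal t then
          δ - vpiece S δ (Dnum S δ t + 1) (t - (tauSeq S δ (Dnum S δ t + 1)).toReal)
        else 0) := by
  classical
  have hIcc := PFAux.A_eq_Icc (S := S) (δ := δ) (t := t) hS hS0 hδ ht
  set T := ENNReal.ofReal t with hT
  set D := Dnum S δ t with hD
  have hfact1 : ∀ i, 1 ≤ i → i ≤ D → thetaSeq S δ i ≤ T :=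
    fun i h1 h2 => (((Set.ext_iff.1 hIcc i).2 ⟨h1, h2⟩)).2
  have hfact2 : T < thetaSeq S δ (D+1) := by
    by_contra h
    push_neg at h
    have h2 : D + 1 ∈ Set.Icc 1 D := (Set.ext_iff.1 hIcc (D+1)).1 ⟨by omega, h⟩
    have := h2.2
    omega
  set f : ℕ → ℝ :=
    fun i => S (clip t (tauSeq S δ (i+1))) - S (clip t (thetaSeq S δ (i+1))) with hf
  have hsupp : ∀ i ∉ Finset.range (D+1), f i = 0 := by
    intro i hi
    rw [Finset.mem_range, not_lt] at hi
    have h1 : T < thetaSeq S δ i := lt_of_lt_of_le hfact2 (PFAux.theta_mono S δ hi)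
    have h2 : T < tauSeq S δ (i+1) := lt_of_lt_of_le h1 (PFAux.theta_le_tau S δ i)
    have h3 : T < thetaSeq S δ (i+1) := lt_of_lt_of_le h2 (PFAux.tau_le_theta S δ i)
    rw [hf]
    simp only
    rw [PFAux.clip_of_gt ht h2, PFAux.clip_of_gt ht h3, sub_self]
  have hgain : portfolioGain S δ t = ∑ i ∈ Finset.range (D+1), f i := by
    rw [portfolioGain]
    exact tsum_eq_sum hsupp
  have hmain : ∀ i ∈ Finset.range D, f i = δ := by
    intro i hi
    rw [Finset.mem_range] at hi
    have hθ : thetaSeq S δ (i+1) ≤ T := hfact1 (i+1) (by omega) (by omega)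
    have hτ : tauSeq S δ (i+1) ≤ T := le_trans (PFAux.tau_le_theta S δ i) hθ
    have hθfin : thetaSeq S δ (i+1) < ⊤ := lt_of_le_of_lt hθ ENNReal.ofReal_lt_top
    have hτfin : tauSeq S δ (i+1) < ⊤ := lt_of_le_of_lt (PFAux.tau_le_theta S δ i) hθfin
    rw [hf]
    simp only
    rw [PFAux.clip_of_le ht hτ, PFAux.clip_of_le ht hθ,
      (PFAux.vals hS hS0 hδ i).2 hτfin, (PFAux.vals hS hS0 hδ (i+1)).1 hθfin, sub_zero]
  have hfD : f D = (if tauSeq S δ (D + 1) ≤ T then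
      δ - vpiece S δ (D + 1) (t - (tauSeq S δ (D + 1)).toReal) else 0) := by
    by_cases hcase : tauSeq S δ (D+1) ≤ T
    · rw [if_pos hcase, hf]
      simp only
      rw [PFAux.clip_of_le ht hcase, vpiece,
        (show t - (tauSeq S δ (D+1)).toReal + (tauSeq S δ (D+1)).toReal = t by ring)]
      ring
    · rw [if_neg hcase, hf]
      simp only
      push_neg at hcase
      rw [PFAux.clip_of_gt ht hcase, PFAux.clip_of_gt ht hfact2, sub_self]
  rw [hgain, Finset.sum_range_succ, Finset.sum_congr rfl hmain, Finset.sum_const,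
    Finset.card_range, nsmul_eq_mul, hfD, mul_comm]
end
end
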